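/- arXiv:math/0611665 — 16 statements merged into one kernel-verified Lean document; each statement's English description precedes it below -/
import Mathlib

section
/- Discrete l'Hospital monotonicity rule, case ρ nondecreasing and g·Δg > 0: if ρ is nondecreasing on [a+1,b] (ρ(n) ≤ ρ(n+1) whenever a+1 ≤ n ≤ n+1 ≤ b) and g(n)·Δg(n) > 0 for all n ∈ [a+1,b], then there exists k ∈ [a,b] such that r is nonincreasing on [a,k] (r(n−1) ≥ r(n) for all n with a+1 ≤ n ≤ k) and nondecreasing on [k,b] (r(n−1) ≤ r(n) for all n with k+1 ≤ n ≤ b). -/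
/-!
Write `r n = f n / g n` and `ρ n = Δf n / Δg n`. Since `g (n - 1)` and `Δg n` have the same sign,
`r n` is the mediant of `r (n - 1)` and `ρ n`, so it lies strictly between them or equals both.
Hence, if `r` rises at step `n`, then `r n < ρ n ≤ ρ (n + 1)`, and the mediant property at step
`n + 1` makes `r` rise again. So once `r` rises it keeps rising, and `k` is the point just before
the first rise (or `b` if there is none).
-/

section Mediant

variable {K : Type*} [Field K] [LinearOrder K] [IsStrictOrderedRing K]

theorem div_lt_div_iff_of_mul_pos {a b c d : K} (h : 0 < b * d) :
    a / b < c / d ↔ a * d < c * b := by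
  rw [← sub_pos, div_sub_div _ _ (right_ne_zero_of_mul h.ne') (left_ne_zero_of_mul h.ne'),
    mul_comm d b, div_pos_iff_of_pos_right h, sub_pos, mul_comm d a]

variable {x₀ y₀ x₁ y₁ : K}

theorem div_lt_div_iff_lt_sub_div_sub (h : 0 < y₀ * (y₁ - y₀)) :
    x₀ / y₀ < x₁ / y₁ ↔ x₀ / y₀ < (x₁ - x₀) / (y₁ - y₀) := by
  have h₀₁ : 0 < y₀ * y₁ := by nlinarith [sq_nonneg y₀]
  rw [div_lt_div_iff_of_mul_pos h₀₁, div_lt_div_iff_of_mul_pos h]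
  constructor <;> intro <;> linarith

theorem div_lt_sub_div_sub_iff (h : 0 < y₀ * (y₁ - y₀)) :
    x₁ / y₁ < (x₁ - x₀) / (y₁ - y₀) ↔ x₀ / y₀ < (x₁ - x₀) / (y₁ - y₀) := by
  have h₁ : 0 < y₁ * (y₁ - y₀) := by nlinarith [sq_nonneg (y₁ - y₀)]
  rw [div_lt_div_iff_of_mul_pos h₁, div_lt_div_iff_of_mul_pos h]
  constructor <;> intro <;> linarith

end Mediant

section TurningPoint

variable {α : Type*} [LinearOrder α] {s : ℤ → α} {a b : ℤ}

theorem lt_of_rise_persists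
    (hs : ∀ n, a + 1 ≤ n → n + 1 ≤ b → s (n - 1) < s n → s n < s (n + 1))
    {n₀ : ℤ} (ha : a + 1 ≤ n₀) (hrise : s (n₀ - 1) < s n₀) :
    ∀ n, n₀ ≤ n → n ≤ b → s (n - 1) < s n := by
  intro n hn
  induction n, hn using Int.leInduction with
  | base => exact fun _ => hrise
  | succ n hn ih =>
    intro hnb
    rw [add_sub_cancel_right]
    exact hs n (by omega) hnb (ih (by omega))

theorem exists_turning_point_of_rise_persists (hab : a ≤ b)
    (hs : ∀ n, a + 1 ≤ n → n + 1 ≤ b → s (n - 1) < s n → s n < s (n + 1)) :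
    ∃ k, a ≤ k ∧ k ≤ b ∧
      (∀ n, a + 1 ≤ n → n ≤ k → s n ≤ s (n - 1)) ∧
      (∀ n, k + 1 ≤ n → n ≤ b → s (n - 1) ≤ s n) := by
  by_cases hrises : ∃ n, (a + 1 ≤ n ∧ n ≤ b) ∧ s (n - 1) < s n
  · obtain ⟨n₀, ⟨⟨ha, hb⟩, hrise⟩, hleast⟩ :=
      Int.exists_least_of_bdd ⟨a + 1, fun _ hn => hn.1.1⟩ hrises
    refine ⟨n₀ - 1, by omega, by omega, fun n han hn => ?_, fun n hn hnb => ?_⟩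
    · exact not_lt.mp fun h => absurd (hleast n ⟨⟨han, by omega⟩, h⟩) (by omega)
    · exact (lt_of_rise_persists hs ha hrise n (by omega) hnb).le
  · push Not at hrises
    exact ⟨b, hab, le_rfl, fun n han hnb => hrises n ⟨han, hnb⟩, fun n hn hnb => by omega⟩

end TurningPoint

theorem discrete_lhospital_monotone_rule_case1_general
    (a b : ℤ) (hab : a ≤ b) (f g : ℤ → ℝ)
    (hgsign : ∀ n m : ℤ, a ≤ n → n ≤ b → a ≤ m → m ≤ b → 0 < g n * g m)
    (hρ : ∀ n : ℤ, a + 1 ≤ n → n + 1 ≤ b →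
      (f n - f (n - 1)) / (g n - g (n - 1)) ≤ (f (n + 1) - f n) / (g (n + 1) - g n))
    (hgΔg : ∀ n : ℤ, a + 1 ≤ n → n ≤ b → 0 < g n * (g n - g (n - 1))) :
    ∃ k : ℤ, a ≤ k ∧ k ≤ b ∧
      (∀ n : ℤ, a + 1 ≤ n → n ≤ k → f n / g n ≤ f (n - 1) / g (n - 1)) ∧
      (∀ n : ℤ, k + 1 ≤ n → n ≤ b → f (n - 1) / g (n - 1) ≤ f n / g n) := by
  have hsign : ∀ n, a + 1 ≤ n → n ≤ b → 0 < g (n - 1) * (g n - g (n - 1)) := by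
    intro n ha hb
    have := hgsign n (n - 1) (by omega) hb (by omega) (by omega)
    nlinarith [hgΔg n ha hb, sq_nonneg (g n)]
  refine exists_turning_point_of_rise_persists hab fun n ha hb hrise => ?_
  have hsign' := hsign (n + 1) (by omega) hb
  rw [add_sub_cancel_right] at hsign'
  have hmediant : f n / g n < (f n - f (n - 1)) / (g n - g (n - 1)) :=
    (div_lt_sub_div_sub_iff (hsign n ha (by omega))).mpr
      ((div_lt_div_iff_lt_sub_div_sub (hsign n ha (by omega))).mp hrise)
  simpa only [add_sub_cancel_right] using
    (div_lt_div_iff_lt_sub_div_sub hsign').mpr (hmediant.trans_le (hρ n ha hb))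

/-- Discrete l'Hospital monotonicity rule, case ρ nondecreasing and g·Δg > 0. -/
theorem discrete_lhospital_monotone_rule_case1
    (a b : ℤ) (hab : a ≤ b) (f g : ℤ → ℝ)
    (hg : ∀ n : ℤ, a ≤ n → n ≤ b → g n ≠ 0)
    (hgsign : ∀ n m : ℤ, a ≤ n → n ≤ b → a ≤ m → m ≤ b → 0 < g n * g m)
    (hΔg : ∀ n : ℤ, a + 1 ≤ n → n ≤ b → g n - g (n - 1) ≠ 0)
    (hΔgsign : ∀ n m : ℤ, a + 1 ≤ n → n ≤ b → a + 1 ≤ m → m ≤ b →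
      0 < (g n - g (n - 1)) * (g m - g (m - 1)))
    (hρ : ∀ n : ℤ, a + 1 ≤ n → n + 1 ≤ b →
      (f n - f (n - 1)) / (g n - g (n - 1)) ≤ (f (n + 1) - f n) / (g (n + 1) - g n))
    (hgΔg : ∀ n : ℤ, a + 1 ≤ n → n ≤ b → 0 < g n * (g n - g (n - 1))) :
    ∃ k : ℤ, a ≤ k ∧ k ≤ b ∧
      (∀ n : ℤ, a + 1 ≤ n → n ≤ k → f n / g n ≤ f (n - 1) / g (n - 1)) ∧
      (∀ n : ℤ, k + 1 ≤ n → n ≤ b → f (n - 1) / g (n - 1) ≤ f n / g n) :=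
  discrete_lhospital_monotone_rule_case1_general a b hab f g hgsign hρ hgΔg
end

section
/- Discrete l'Hospital monotonicity rule, case ρ nonincreasing and g·Δg > 0: if ρ is nonincreasing on [a+1,b] (ρ(n) ≥ ρ(n+1) whenever a+1 ≤ n ≤ n+1 ≤ b) and g(n)·Δg(n) > 0 for all n ∈ [a+1,b], then there exists k ∈ [a,b] such that r is nondecreasing on [a,k] (r(n−1) ≤ r(n) for all n with a+1 ≤ n ≤ k) and nonincreasing on [k,b] (r(n−1) ≥ r(n) for all n with k+1 ≤ n ≤ b). -/
/-- Discrete l'Hospital monotonicity rule, case ρ nonincreasing and g·Δg > 0. -/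
theorem discrete_lhospital_monotone_rule_case2
    (a b : ℤ) (hab : a ≤ b) (f g : ℤ → ℝ)
    (hg : ∀ n : ℤ, a ≤ n → n ≤ b → g n ≠ 0)
    (hgsign : ∀ n m : ℤ, a ≤ n → n ≤ b → a ≤ m → m ≤ b → 0 < g n * g m)
    (hΔg : ∀ n : ℤ, a + 1 ≤ n → n ≤ b → g n - g (n - 1) ≠ 0)
    (hΔgsign : ∀ n m : ℤ, a + 1 ≤ n → n ≤ b → a + 1 ≤ m → m ≤ b →
      0 < (g n - g (n - 1)) * (g m - g (m - 1)))
    (hρ : ∀ n : ℤ, a + 1 ≤ n → n + 1 ≤ b →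
      (f (n + 1) - f n) / (g (n + 1) - g n) ≤ (f n - f (n - 1)) / (g n - g (n - 1)))
    (hgΔg : ∀ n : ℤ, a + 1 ≤ n → n ≤ b → 0 < g n * (g n - g (n - 1))) :
    ∃ k : ℤ, a ≤ k ∧ k ≤ b ∧
      (∀ n : ℤ, a + 1 ≤ n → n ≤ k → f (n - 1) / g (n - 1) ≤ f n / g n) ∧
      (∀ n : ℤ, k + 1 ≤ n → n ≤ b → f n / g n ≤ f (n - 1) / g (n - 1)) := by
  classical
  set D : ℤ → ℝ := fun n => f n * g (n - 1) - g n * f (n - 1) with hD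
  -- relation between D and r-monotonicity
  have key : ∀ n : ℤ, a + 1 ≤ n → n ≤ b →
      (f (n - 1) / g (n - 1) ≤ f n / g n ↔ 0 ≤ D n) := by
    intro n h1 h2
    have hgn : g n ≠ 0 := hg n (by omega) h2
    have hgn1 : g (n - 1) ≠ 0 := hg (n - 1) (by omega) (by omega)
    have hpos : 0 < g n * g (n - 1) := hgsign n (n - 1) (by omega) h2 (by omega) (by omega)
    rw [← sub_nonneg, div_sub_div _ _ hgn hgn1, le_div_iff₀ hpos, zero_mul]
  -- propagation of negativity of D
  have step : ∀ n : ℤ, a + 1 ≤ n → n + 1 ≤ b → D n < 0 → D (n + 1) < 0 := by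
    intro n h1 h2 hDn
    have hd1 : g n - g (n - 1) ≠ 0 := hΔg n h1 (by omega)
    have hd2 : g (n + 1) - g n ≠ 0 := by
      have := hΔg (n + 1) (by omega) h2
      simpa using this
    have hdd : 0 < (g n - g (n - 1)) * (g (n + 1) - g n) := by
      have := hΔgsign n (n + 1) h1 (by omega) (by omega) h2
      simpa using this
    have hgd : 0 < g n * (g n - g (n - 1)) := hgΔg n h1 (by omega)
    have hrho := hρ n h1 h2
    -- cross-multiplied form of hrho
    have hcross : (f (n + 1) - f n) * (g n - g (n - 1)) ≤
        (f n - f (n - 1)) * (g (n + 1) - g n) := by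
      rcases mul_pos_iff.mp hdd with ⟨hp1, hp2⟩ | ⟨hn1, hn2⟩
      · exact (div_le_div_iff₀ hp2 hp1).mp hrho
      · have h := (div_le_div_iff₀ (neg_pos.2 hn2) (neg_pos.2 hn1)).mp
          (by rw [neg_div_neg_eq, neg_div_neg_eq]; exact hrho)
        nlinarith [h]
    -- now pure algebra
    have hDn' : (f n - f (n - 1)) * g n - f n * (g n - g (n - 1)) < 0 := by
      have e : D n = (f n - f (n - 1)) * g n - f n * (g n - g (n - 1)) := by
        simp only [hD]; ring
      linarith [e ▸ hDn]
    have hgoal : (f (n + 1) - f n) * g n - f n * (g (n + 1) - g n) < 0 := by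
      nlinarith [mul_le_mul_of_nonneg_right hcross hgd.le,
        mul_lt_mul_of_pos_right hDn' hdd,
        mul_self_pos.mpr hd1]
    have e : D (n + 1) = (f (n + 1) - f n) * g n - f n * (g (n + 1) - g n) := by
      simp only [hD]; ring_nf
    linarith [e ▸ hgoal]
  by_cases hex : ∃ n : ℤ, (a + 1 ≤ n ∧ n ≤ b) ∧ D n < 0
  · obtain ⟨n₀, ⟨⟨hn₀1, hn₀2⟩, hn₀D⟩, hleast⟩ :=
      Int.exists_least_of_bdd (P := fun n => (a + 1 ≤ n ∧ n ≤ b) ∧ D n < 0)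
        ⟨a + 1, fun z hz => hz.1.1⟩ hex
    refine ⟨n₀ - 1, by omega, by omega, ?_, ?_⟩
    · intro n h1 h2
      have hnb : n ≤ b := by omega
      have hnot : ¬ ((a + 1 ≤ n ∧ n ≤ b) ∧ D n < 0) := fun h => by
        have := hleast n h; omega
      have : 0 ≤ D n := by
        by_contra h
        exact hnot ⟨⟨h1, hnb⟩, lt_of_not_ge h⟩
      exact (key n h1 hnb).mpr this
    · intro n h1 h2
      have h1' : n₀ ≤ n := by omega
      have hDneg : ∀ m : ℤ, n₀ ≤ m → m ≤ b → D m < 0 := by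
        refine Int.le_induction (fun _ => hn₀D)
          (fun m hm ih hmb => step m (by omega) hmb (ih (by omega)))
      have hlt : D n < 0 := hDneg n h1' h2
      have := (key n (by omega) h2)
      by_contra hcon
      have : 0 ≤ D n := (key n (by omega) h2).mp (le_of_not_ge hcon)
      linarith
  · refine ⟨b, hab, le_refl b, ?_, ?_⟩
    · intro n h1 h2
      have : 0 ≤ D n := by
        by_contra h
        exact hex ⟨n, ⟨h1, h2⟩, lt_of_not_ge h⟩
      exact (key n h1 h2).mpr this
    · intro n h1 h2; omega
end

section
/- Discrete l'Hospital monotonicity rule, case ρ nondecreasing and g·Δg < 0: if ρ is nondecreasing on [a+1,b] (ρ(n) ≤ ρ(n+1) whenever a+1 ≤ n ≤ n+1 ≤ b) and g(n)·Δg(n) < 0 for all n ∈ [a+1,b], then there exists k ∈ [a,b] such that r is nondecreasing on [a,k] (r(n−1) ≤ r(n) for all n with a+1 ≤ n ≤ k) and nonincreasing on [k,b] (r(n−1) ≥ r(n) for all n with k+1 ≤ n ≤ b). -/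
/-!
With r = f/g and ρ = Δf/Δg one has
  r(n) - r(n-1) = Δg(n)/g(n-1) · (ρ(n) - r(n)) = Δg(n)/g(n) · (ρ(n) - r(n-1)),
and both factors Δg(n)/g(n-1), Δg(n)/g(n) are negative when g has constant sign and g·Δg < 0.
So a strict descent r(n) < r(n-1) means r(n) < ρ(n) ≤ ρ(n+1), which gives r(n+1) < r(n):
once r strictly decreases it keeps doing so, and k is the point just before the first strict descent.
-/

section

variable {K : Type*} [Field K] {p p' q q' : K}

theorem div_sub_div_eq_mul_slope_sub_div_left (hq : q ≠ 0) (hq' : q' ≠ 0) (hd : q - q' ≠ 0) :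
    p / q - p' / q' = (q - q') / q * ((p - p') / (q - q') - p' / q') := by
  field_simp
  ring

theorem div_sub_div_eq_mul_slope_sub_div_right (hq : q ≠ 0) (hq' : q' ≠ 0) (hd : q - q' ≠ 0) :
    p / q - p' / q' = (q - q') / q' * ((p - p') / (q - q') - p / q) := by
  field_simp
  ring

end

theorem div_lt_div_of_div_lt_div_of_slope_le {K : Type*} [Field K] [LinearOrder K]
    [IsStrictOrderedRing K] {p' p p'' q' q q'' : K}
    (hsign : 0 < q' * q) (hq : q * (q - q') < 0) (hq'' : q'' * (q'' - q) < 0)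
    (hslope : (p - p') / (q - q') ≤ (p'' - p) / (q'' - q)) (hdesc : p / q < p' / q') :
    p'' / q'' < p / q := by
  have hq0 : q ≠ 0 := left_ne_zero_of_mul hq.ne
  have hq''0 : q'' ≠ 0 := left_ne_zero_of_mul hq''.ne
  have hfactor : (q - q') / q' < 0 := by
    rw [show (q - q') / q' = q * (q - q') / (q' * q) by field_simp]
    exact div_neg_of_neg_of_pos hq hsign
  have hfactor'' : (q'' - q) / q'' < 0 := by
    rw [show (q'' - q) / q'' = q'' * (q'' - q) / (q'' * q'') by field_simp]
    exact div_neg_of_neg_of_pos hq'' (mul_self_pos.2 hq''0)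
  have hbelow : 0 < (p - p') / (q - q') - p / q := by
    rw [← sub_neg, div_sub_div_eq_mul_slope_sub_div_right hq0 (left_ne_zero_of_mul hsign.ne')
      (right_ne_zero_of_mul hq.ne)] at hdesc
    exact pos_of_mul_neg_right hdesc hfactor.le
  rw [← sub_neg, div_sub_div_eq_mul_slope_sub_div_left hq''0 hq0 (right_ne_zero_of_mul hq''.ne)]
  exact mul_neg_of_neg_of_pos hfactor'' (by linarith)

section

variable {α : Type*} [LinearOrder α] {u : ℤ → α} {a b : ℤ}

theorem Int.lt_sub_one_of_le_of_lt_sub_one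
    (hstep : ∀ n, a + 1 ≤ n → n + 1 ≤ b → u n < u (n - 1) → u (n + 1) < u n)
    {m : ℤ} (hm : a + 1 ≤ m) (hdesc : u m < u (m - 1)) {n : ℤ} (hmn : m ≤ n) (hnb : n ≤ b) :
    u n < u (n - 1) := by
  induction n, hmn using Int.leInduction with
  | base => exact hdesc
  | succ n hmn ih =>
    rw [add_sub_cancel_right]
    exact hstep n (by omega) hnb (ih (by omega))

theorem Int.exists_peak_of_descent_step (hab : a ≤ b)
    (hstep : ∀ n, a + 1 ≤ n → n + 1 ≤ b → u n < u (n - 1) → u (n + 1) < u n) :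
    ∃ k, a ≤ k ∧ k ≤ b ∧ (∀ n, a + 1 ≤ n → n ≤ k → u (n - 1) ≤ u n) ∧
      (∀ n, k + 1 ≤ n → n ≤ b → u n ≤ u (n - 1)) := by
  obtain ⟨m, ⟨hma, hmb, hm⟩, hleast⟩ := Int.exists_least_of_bdd
    (P := fun n => a + 1 ≤ n ∧ n ≤ b + 1 ∧ (n = b + 1 ∨ u n < u (n - 1)))
    ⟨a + 1, fun _ h => h.1⟩ ⟨b + 1, by omega, le_rfl, .inl rfl⟩
  refine ⟨m - 1, by omega, by omega, fun n hn hnk => ?_, fun n hn hnb => ?_⟩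
  · by_contra! hlt
    have := hleast n ⟨hn, by omega, .inr hlt⟩
    omega
  · have hdesc : u m < u (m - 1) := hm.resolve_left (by omega)
    exact (Int.lt_sub_one_of_le_of_lt_sub_one hstep hma hdesc (by omega) hnb).le

end

theorem discrete_lhospital_monotone_rule_case3_general
    (a b : ℤ) (hab : a ≤ b) (f g : ℤ → ℝ)
    (hgsign : ∀ n m : ℤ, a ≤ n → n ≤ b → a ≤ m → m ≤ b → 0 < g n * g m)
    (hρ : ∀ n : ℤ, a + 1 ≤ n → n + 1 ≤ b →
      (f n - f (n - 1)) / (g n - g (n - 1)) ≤ (f (n + 1) - f n) / (g (n + 1) - g n))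
    (hgΔg : ∀ n : ℤ, a + 1 ≤ n → n ≤ b → g n * (g n - g (n - 1)) < 0) :
    ∃ k : ℤ, a ≤ k ∧ k ≤ b ∧
      (∀ n : ℤ, a + 1 ≤ n → n ≤ k → f (n - 1) / g (n - 1) ≤ f n / g n) ∧
      (∀ n : ℤ, k + 1 ≤ n → n ≤ b → f n / g n ≤ f (n - 1) / g (n - 1)) := by
  refine Int.exists_peak_of_descent_step (u := fun n => f n / g n) hab
    fun n hn hnb hdesc => div_lt_div_of_div_lt_div_of_slope_le
      (hgsign (n - 1) n (by omega) (by omega) (by omega) (by omega)) (hgΔg n hn (by omega)) ?_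
      (hρ n hn hnb) hdesc
  simpa only [add_sub_cancel_right] using hgΔg (n + 1) (by omega) hnb

/-- Discrete l'Hospital monotonicity rule, case ρ nondecreasing and g·Δg < 0. -/
theorem discrete_lhospital_monotone_rule_case3
    (a b : ℤ) (hab : a ≤ b) (f g : ℤ → ℝ)
    (hg : ∀ n : ℤ, a ≤ n → n ≤ b → g n ≠ 0)
    (hgsign : ∀ n m : ℤ, a ≤ n → n ≤ b → a ≤ m → m ≤ b → 0 < g n * g m)
    (hΔg : ∀ n : ℤ, a + 1 ≤ n → n ≤ b → g n - g (n - 1) ≠ 0)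
    (hΔgsign : ∀ n m : ℤ, a + 1 ≤ n → n ≤ b → a + 1 ≤ m → m ≤ b →
      0 < (g n - g (n - 1)) * (g m - g (m - 1)))
    (hρ : ∀ n : ℤ, a + 1 ≤ n → n + 1 ≤ b →
      (f n - f (n - 1)) / (g n - g (n - 1)) ≤ (f (n + 1) - f n) / (g (n + 1) - g n))
    (hgΔg : ∀ n : ℤ, a + 1 ≤ n → n ≤ b → g n * (g n - g (n - 1)) < 0) :
    ∃ k : ℤ, a ≤ k ∧ k ≤ b ∧
      (∀ n : ℤ, a + 1 ≤ n → n ≤ k → f (n - 1) / g (n - 1) ≤ f n / g n) ∧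
      (∀ n : ℤ, k + 1 ≤ n → n ≤ b → f n / g n ≤ f (n - 1) / g (n - 1)) :=
  discrete_lhospital_monotone_rule_case3_general a b hab f g hgsign hρ hgΔg
end

section
/- Discrete l'Hospital monotonicity rule, case ρ nonincreasing and g·Δg < 0: if ρ is nonincreasing on [a+1,b] (ρ(n) ≥ ρ(n+1) whenever a+1 ≤ n ≤ n+1 ≤ b) and g(n)·Δg(n) < 0 for all n ∈ [a+1,b], then there exists k ∈ [a,b] such that r is nonincreasing on [a,k] (r(n−1) ≥ r(n) for all n with a+1 ≤ n ≤ k) and nondecreasing on [k,b] (r(n−1) ≤ r(n) for all n with k+1 ≤ n ≤ b). -/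
/-!
Write `r = f / g` and `ρ = Δf / Δg`. Since `f(n) = f(n-1) + ρ(n) Δg(n)`, one step gives
`r(n) - ρ(n) = (g(n-1) / g(n)) (r(n-1) - ρ(n))` and
`r(n) - r(n-1) = (-Δg(n) / g(n-1)) (r(n) - ρ(n))`,
with both coefficients positive when `g` has constant sign and `g Δg < 0`. So `r` increases at `n`
exactly when `ρ(n) ≤ r(n)`, and this condition, once it holds, persists as `n` grows because `ρ`
is nonincreasing. Hence `r` decreases up to the first such `n` and increases afterwards.
-/

section SlopeIdentities

variable {K : Type*} [Field K] {a b c d : K}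

theorem div_sub_div_eq_mul_div_sub_sub_div_sub (hc : c ≠ 0) (hd : d ≠ 0) (hcd : c ≠ d) :
    a / c - b / d = (d - c) / d * (a / c - (a - b) / (c - d)) := by
  have hcd' : c - d ≠ 0 := sub_ne_zero.mpr hcd
  field_simp
  ring

theorem div_sub_sub_div_sub_eq_mul (hc : c ≠ 0) (hd : d ≠ 0) (hcd : c ≠ d) :
    a / c - (a - b) / (c - d) = d / c * (b / d - (a - b) / (c - d)) := by
  have hcd' : c - d ≠ 0 := sub_ne_zero.mpr hcd
  field_simp
  ring

end SlopeIdentities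

section SlopeInequalities

variable {K : Type*} [Field K] [LinearOrder K] [IsStrictOrderedRing K] {a b c d : K}

theorem sub_div_sub_le_div_of_le_div (hcd : 0 < c * d) (hne : c ≠ d)
    (h : (a - b) / (c - d) ≤ b / d) : (a - b) / (c - d) ≤ a / c := by
  have hdc : 0 < d / c := div_pos_iff.mpr (pos_and_pos_or_neg_and_neg_of_mul_pos
    (by rwa [mul_comm] at hcd))
  rw [← sub_nonneg, div_sub_sub_div_sub_eq_mul (left_ne_zero_of_mul hcd.ne')
    (right_ne_zero_of_mul hcd.ne') hne]
  exact mul_nonneg hdc.le (sub_nonneg.mpr h)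

theorem div_le_div_iff_sub_div_sub_le_div (hcd : 0 < c * d) (hc : c * (c - d) < 0) :
    b / d ≤ a / c ↔ (a - b) / (c - d) ≤ a / c := by
  have hk : 0 < (d - c) / d := by
    have h : 0 < c ^ 2 * ((d - c) * d) := by
      convert mul_pos hcd (neg_pos.mpr hc) using 1; ring
    exact div_pos_iff.mpr (pos_and_pos_or_neg_and_neg_of_mul_pos
      (pos_of_mul_pos_right h (sq_nonneg c)))
  rw [← sub_nonneg, div_sub_div_eq_mul_div_sub_sub_div_sub (left_ne_zero_of_mul hcd.ne')
    (right_ne_zero_of_mul hcd.ne') (sub_ne_zero.mp (right_ne_zero_of_mul hc.ne)),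
    mul_nonneg_iff_of_pos_left hk, sub_nonneg]

end SlopeInequalities

theorem Int.exists_forall_not_and_forall_of_imp_succ (P : ℤ → Prop) {a b : ℤ} (hab : a ≤ b)
    (hP : ∀ n, a + 1 ≤ n → n + 1 ≤ b → P n → P (n + 1)) :
    ∃ k, a ≤ k ∧ k ≤ b ∧ (∀ n, a + 1 ≤ n → n ≤ k → ¬ P n) ∧ (∀ n, k + 1 ≤ n → n ≤ b → P n) := by
  by_cases hex : ∃ m, a + 1 ≤ m ∧ m ≤ b ∧ P m
  · obtain ⟨m, ⟨ham, hmb, hm⟩, hmin⟩ :=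
      Int.exists_least_of_bdd ⟨a + 1, fun z hz => hz.1⟩ hex
    refine ⟨m - 1, by omega, by omega, fun n han hnk hn => ?_, fun n hkn hnb => ?_⟩
    · have := hmin n ⟨han, by omega, hn⟩
      omega
    · induction n, (show m ≤ n by omega) using Int.leInduction with
      | base => exact hm
      | succ n hmn ih => exact hP n (by omega) hnb (ih (by omega) (by omega))
  · exact ⟨b, hab, le_rfl, fun n han hnb hn => hex ⟨n, han, hnb, hn⟩, fun n _ _ => by omega⟩

theorem discrete_lhospital_monotone_rule_case4_general
    (a b : ℤ) (hab : a ≤ b) (f g : ℤ → ℝ)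
    (hgsign : ∀ n m : ℤ, a ≤ n → n ≤ b → a ≤ m → m ≤ b → 0 < g n * g m)
    (hρ : ∀ n : ℤ, a + 1 ≤ n → n + 1 ≤ b →
      (f (n + 1) - f n) / (g (n + 1) - g n) ≤ (f n - f (n - 1)) / (g n - g (n - 1)))
    (hgΔg : ∀ n : ℤ, a + 1 ≤ n → n ≤ b → g n * (g n - g (n - 1)) < 0) :
    ∃ k : ℤ, a ≤ k ∧ k ≤ b ∧
      (∀ n : ℤ, a + 1 ≤ n → n ≤ k → f n / g n ≤ f (n - 1) / g (n - 1)) ∧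
      (∀ n : ℤ, k + 1 ≤ n → n ≤ b → f (n - 1) / g (n - 1) ≤ f n / g n) := by
  have hr_mono_iff : ∀ n, a + 1 ≤ n → n ≤ b → (f (n - 1) / g (n - 1) ≤ f n / g n ↔
      (f n - f (n - 1)) / (g n - g (n - 1)) ≤ f n / g n) := fun n han hnb =>
    div_le_div_iff_sub_div_sub_le_div (hgsign n (n - 1) (by omega) hnb (by omega) (by omega))
      (hgΔg n han hnb)
  obtain ⟨k, hak, hkb, hbelow, habove⟩ := Int.exists_forall_not_and_forall_of_imp_succ
      (fun n => (f n - f (n - 1)) / (g n - g (n - 1)) ≤ f n / g n) hab fun n han hnb hn => by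
    have hne := sub_ne_zero.mp (right_ne_zero_of_mul (hgΔg (n + 1) (by omega) hnb).ne)
    rw [add_sub_cancel_right] at hne ⊢
    exact sub_div_sub_le_div_of_le_div (hgsign (n + 1) n (by omega) hnb (by omega) (by omega))
      hne ((hρ n han hnb).trans hn)
  refine ⟨k, hak, hkb, fun n han hnk => ?_, fun n hkn hnb => ?_⟩
  · exact le_of_not_ge fun h => hbelow n han hnk ((hr_mono_iff n han (by omega)).mp h)
  · exact (hr_mono_iff n (by omega) hnb).mpr (habove n hkn hnb)

/-- Discrete l'Hospital monotonicity rule, case ρ nonincreasing and g·Δg < 0. -/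
theorem discrete_lhospital_monotone_rule_case4
    (a b : ℤ) (hab : a ≤ b) (f g : ℤ → ℝ)
    (hg : ∀ n : ℤ, a ≤ n → n ≤ b → g n ≠ 0)
    (hgsign : ∀ n m : ℤ, a ≤ n → n ≤ b → a ≤ m → m ≤ b → 0 < g n * g m)
    (hΔg : ∀ n : ℤ, a + 1 ≤ n → n ≤ b → g n - g (n - 1) ≠ 0)
    (hΔgsign : ∀ n m : ℤ, a + 1 ≤ n → n ≤ b → a + 1 ≤ m → m ≤ b →
      0 < (g n - g (n - 1)) * (g m - g (m - 1)))
    (hρ : ∀ n : ℤ, a + 1 ≤ n → n + 1 ≤ b →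
      (f (n + 1) - f n) / (g (n + 1) - g n) ≤ (f n - f (n - 1)) / (g n - g (n - 1)))
    (hgΔg : ∀ n : ℤ, a + 1 ≤ n → n ≤ b → g n * (g n - g (n - 1)) < 0) :
    ∃ k : ℤ, a ≤ k ∧ k ≤ b ∧
      (∀ n : ℤ, a + 1 ≤ n → n ≤ k → f n / g n ≤ f (n - 1) / g (n - 1)) ∧
      (∀ n : ℤ, k + 1 ≤ n → n ≤ b → f (n - 1) / g (n - 1) ≤ f n / g n) :=
  discrete_lhospital_monotone_rule_case4_general a b hab f g hgsign hρ hgΔg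
end

section
/- Strengthened form of the first case of the discrete monotonicity rule: if ρ is nondecreasing on [a+1,b] and g(n)·Δg(n) > 0 for all n ∈ [a+1,b], then there exists k ∈ [a,b] such that Δr(n) ≤ 0 for all n with a+1 ≤ n ≤ k and Δr(n) > 0 for all n with k+1 ≤ n ≤ b. -/
private lemma auxA (f g : ℤ → ℝ) (n : ℤ) (h1 : g n ≠ 0) (h0 : g (n-1) ≠ 0)
    (hd : g n - g (n-1) ≠ 0) :
    f n / g n - f (n-1) / g (n-1)
      = ((g n - g (n-1)) / g (n-1)) *
        ((f n - f (n-1)) / (g n - g (n-1)) - f n / g n) := by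
  field_simp
  ring

private lemma auxB (f g : ℤ → ℝ) (n : ℤ) (h1 : g n ≠ 0) (h2 : g (n+1) ≠ 0)
    (hd : g (n+1) - g n ≠ 0) :
    (f (n+1) - f n) / (g (n+1) - g n) - f (n+1) / g (n+1)
      = (g n / g (n+1)) * ((f (n+1) - f n) / (g (n+1) - g n) - f n / g n) := by
  field_simp
  ring

/-- Strengthened form of the first case of the discrete monotonicity rule. -/
theorem discrete_lhospital_monotone_rule_strengthened
    (a b : ℤ) (hab : a ≤ b) (f g : ℤ → ℝ)
    (hg : ∀ n : ℤ, a ≤ n → n ≤ b → g n ≠ 0)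
    (hgsign : ∀ n m : ℤ, a ≤ n → n ≤ b → a ≤ m → m ≤ b → 0 < g n * g m)
    (hΔg : ∀ n : ℤ, a + 1 ≤ n → n ≤ b → g n - g (n - 1) ≠ 0)
    (hΔgsign : ∀ n m : ℤ, a + 1 ≤ n → n ≤ b → a + 1 ≤ m → m ≤ b →
      0 < (g n - g (n - 1)) * (g m - g (m - 1)))
    (hρ : ∀ n : ℤ, a + 1 ≤ n → n + 1 ≤ b →
      (f n - f (n - 1)) / (g n - g (n - 1)) ≤ (f (n + 1) - f n) / (g (n + 1) - g n))
    (hgΔg : ∀ n : ℤ, a + 1 ≤ n → n ≤ b → 0 < g n * (g n - g (n - 1))) :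
    ∃ k : ℤ, a ≤ k ∧ k ≤ b ∧
      (∀ n : ℤ, a + 1 ≤ n → n ≤ k → f n / g n - f (n - 1) / g (n - 1) ≤ 0) ∧
      (∀ n : ℤ, k + 1 ≤ n → n ≤ b → 0 < f n / g n - f (n - 1) / g (n - 1)) := by
  classical
  -- positivity of the factor Δg n / g (n-1)
  have hfac : ∀ n : ℤ, a + 1 ≤ n → n ≤ b → 0 < (g n - g (n - 1)) / g (n - 1) := by
    intro n hn1 hn2
    have hgn : g n ≠ 0 := hg n (by omega) hn2
    have hg0 : g (n - 1) ≠ 0 := hg (n - 1) (by omega) (by omega)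
    have h1 : 0 < g (n - 1) * g n := hgsign (n - 1) n (by omega) (by omega) (by omega) hn2
    have h2 : 0 < g n * (g n - g (n - 1)) := hgΔg n hn1 hn2
    have hsq : 0 < g n * g n := mul_self_pos.mpr hgn
    have hnum : 0 < g (n - 1) * (g n - g (n - 1)) := by nlinarith
    have : (g n - g (n - 1)) / g (n - 1)
        = (g (n - 1) * (g n - g (n - 1))) / (g (n - 1) * g (n - 1)) := by
      field_simp
    rw [this]
    exact div_pos hnum (mul_self_pos.mpr hg0)
  -- sign equivalence: Δr n > 0 ↔ ρ n > r n (one direction each via auxA)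
  have hsign : ∀ n : ℤ, a + 1 ≤ n → n ≤ b →
      (0 < f n / g n - f (n - 1) / g (n - 1) ↔
       0 < (f n - f (n - 1)) / (g n - g (n - 1)) - f n / g n) := by
    intro n hn1 hn2
    have hgn : g n ≠ 0 := hg n (by omega) hn2
    have hg0 : g (n - 1) ≠ 0 := hg (n - 1) (by omega) (by omega)
    have hd : g n - g (n - 1) ≠ 0 := hΔg n hn1 hn2
    rw [auxA f g n hgn hg0 hd]
    constructor
    · intro h
      rcases mul_pos_iff.mp h with ⟨_, h2⟩ | ⟨h1, _⟩
      · exact h2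
      · exact absurd (hfac n hn1 hn2) (by linarith)
    · intro h
      exact mul_pos (hfac n hn1 hn2) h
  -- upward closure
  have step : ∀ n : ℤ, a + 1 ≤ n → n + 1 ≤ b →
      0 < f n / g n - f (n - 1) / g (n - 1) →
      0 < f (n + 1) / g (n + 1) - f n / g n := by
    intro n hn1 hn2 hpos
    have hgn : g n ≠ 0 := hg n (by omega) (by omega)
    have hgn1 : g (n + 1) ≠ 0 := hg (n + 1) (by omega) hn2
    have hd1 : g (n + 1) - g n ≠ 0 := by
      have := hΔg (n + 1) (by omega) hn2
      simpa using this
    have h1 : 0 < (f n - f (n - 1)) / (g n - g (n - 1)) - f n / g n :=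
      (hsign n hn1 (by omega)).mp hpos
    have h2 : (f n - f (n - 1)) / (g n - g (n - 1)) ≤ (f (n + 1) - f n) / (g (n + 1) - g n) :=
      hρ n hn1 hn2
    have h3 : 0 < (f (n + 1) - f n) / (g (n + 1) - g n) - f n / g n := by linarith
    have hgg : 0 < g n / g (n + 1) := by
      have h4 : 0 < g n * g (n + 1) := hgsign n (n + 1) (by omega) (by omega) (by omega) hn2
      have : g n / g (n + 1) = (g n * g (n + 1)) / (g (n + 1) * g (n + 1)) := by field_simp
      rw [this]; exact div_pos h4 (mul_self_pos.mpr hgn1)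
    have h5 : 0 < (f (n + 1) - f n) / (g (n + 1) - g n) - f (n + 1) / g (n + 1) := by
      rw [auxB f g n hgn hgn1 hd1]
      exact mul_pos hgg h3
    have := (hsign (n + 1) (by omega) hn2).mpr (by simpa using h5)
    simpa using this
  by_cases H : ∃ n : ℤ, a + 1 ≤ n ∧ n ≤ b ∧ 0 < f n / g n - f (n - 1) / g (n - 1)
  · obtain ⟨lb, ⟨hlb1, hlb2, hlb3⟩, hmin⟩ :=
      Int.exists_least_of_bdd (P := fun n => a + 1 ≤ n ∧ n ≤ b ∧
        0 < f n / g n - f (n - 1) / g (n - 1)) ⟨a + 1, fun z hz => hz.1⟩ H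
    have hup : ∀ n : ℤ, lb ≤ n → n ≤ b → 0 < f n / g n - f (n - 1) / g (n - 1) :=
      Int.le_induction (fun _ => hlb3)
        (fun m hm ih hmb => by simpa using step m (by omega) hmb (ih (by omega)))
    refine ⟨lb - 1, by omega, by omega, ?_, ?_⟩
    · intro n hn1 hn2
      by_contra hpos
      push_neg at hpos
      have := hmin n ⟨hn1, by omega, hpos⟩
      omega
    · intro n hn1 hn2
      exact hup n (by omega) hn2
  · push_neg at H
    refine ⟨b, hab, le_refl b, ?_, ?_⟩
    · intro n hn1 hn2
      exact le_of_not_gt fun h => absurd h (by simpa using H n hn1 hn2)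
    · intro n hn1 hn2; omega
end

section
/- Mirror strengthened form of the first case of the discrete monotonicity rule: if ρ is nondecreasing on [a+1,b] and g(n)·Δg(n) > 0 for all n ∈ [a+1,b], then there exists ℓ ∈ [a,b] such that Δr(n) < 0 for all n with a+1 ≤ n ≤ ℓ and Δr(n) ≥ 0 for all n with ℓ+1 ≤ n ≤ b. -/
/-!
Writing `r = f / g` and `ρ = Δf / Δg`, one has the two identities
`Δr(n) = Δg(n) / g(n-1) · (ρ(n) - r(n)) = Δg(n) / g(n) · (ρ(n) - r(n-1))`,
and both prefactors are positive, so `Δr(n)` has the sign of `ρ(n) - r(n)` and of `ρ(n) - r(n-1)`.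
Hence `Δr(n) ≥ 0` gives `r(n) ≤ ρ(n) ≤ ρ(n+1)`, i.e. `Δr(n+1) ≥ 0`: the indices where `Δr ≥ 0`
form a final segment of `[a+1, b]`, and `ℓ` is the index just before it.
-/

theorem Int.exists_threshold_of_succ {P : ℤ → Prop} {a b : ℤ} (hab : a ≤ b)
    (hP : ∀ n, a + 1 ≤ n → n + 1 ≤ b → P n → P (n + 1)) :
    ∃ l, a ≤ l ∧ l ≤ b ∧ (∀ n, a + 1 ≤ n → n ≤ l → ¬ P n) ∧ (∀ n, l + 1 ≤ n → n ≤ b → P n) := by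
  induction b, hab using Int.leInduction with
  | base => exact ⟨a, le_rfl, le_rfl, fun n _ _ => by omega, fun n _ _ => by omega⟩
  | succ b _ ih =>
    obtain ⟨l, hal, hlb, hbelow, habove⟩ := ih fun n h₁ h₂ => hP n h₁ (by omega)
    by_cases hPb : P (b + 1)
    · refine ⟨l, hal, by omega, hbelow, fun n h₁ h₂ => ?_⟩
      rcases (show n ≤ b ∨ n = b + 1 by omega) with h | rfl
      · exact habove n h₁ h
      · exact hPb
    · obtain rfl : l = b := by
        by_contra hne
        exact hPb (hP b (by omega) le_rfl (habove b (by omega) le_rfl))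
      refine ⟨l + 1, by omega, le_rfl, fun n h₁ h₂ => ?_, fun n _ _ => by omega⟩
      rcases (show n ≤ l ∨ n = l + 1 by omega) with h | rfl
      · exact hbelow n h₁ h
      · exact hPb

section IncrementRatio

variable {x₀ x₁ y₀ y₁ : ℝ}

theorem div_sub_div_eq_mul_sub_div_right (hy₀ : y₀ ≠ 0) (hy₁ : y₁ ≠ 0) (hy : y₁ - y₀ ≠ 0) :
    x₁ / y₁ - x₀ / y₀ = (y₁ - y₀) / y₀ * ((x₁ - x₀) / (y₁ - y₀) - x₁ / y₁) := by
  field_simp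
  ring

theorem div_sub_div_eq_mul_sub_div_left (hy₀ : y₀ ≠ 0) (hy₁ : y₁ ≠ 0) (hy : y₁ - y₀ ≠ 0) :
    x₁ / y₁ - x₀ / y₀ = (y₁ - y₀) / y₁ * ((x₁ - x₀) / (y₁ - y₀) - x₀ / y₀) := by
  field_simp
  ring

variable (h₁ : 0 < y₁ * (y₁ - y₀)) (h₀₁ : 0 < y₁ * y₀)
include h₁ h₀₁

theorem div_sub_div_nonneg_iff_le_sub_div_sub_right :
    0 ≤ x₁ / y₁ - x₀ / y₀ ↔ x₁ / y₁ ≤ (x₁ - x₀) / (y₁ - y₀) := by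
  have hfactor : 0 < (y₁ - y₀) / y₀ :=
    div_pos_iff.2 (mul_pos_iff.1 (by nlinarith [sq_nonneg y₁] : 0 < (y₁ - y₀) * y₀))
  rw [div_sub_div_eq_mul_sub_div_right (right_ne_zero_of_mul h₀₁.ne')
    (left_ne_zero_of_mul h₁.ne') (right_ne_zero_of_mul h₁.ne'),
    mul_nonneg_iff_of_pos_left hfactor, sub_nonneg]

theorem div_sub_div_nonneg_iff_le_sub_div_sub_left :
    0 ≤ x₁ / y₁ - x₀ / y₀ ↔ x₀ / y₀ ≤ (x₁ - x₀) / (y₁ - y₀) := by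
  have hfactor : 0 < (y₁ - y₀) / y₁ := div_pos_iff.2 (mul_pos_iff.1 (by rwa [mul_comm]))
  rw [div_sub_div_eq_mul_sub_div_left (right_ne_zero_of_mul h₀₁.ne')
    (left_ne_zero_of_mul h₁.ne') (right_ne_zero_of_mul h₁.ne'),
    mul_nonneg_iff_of_pos_left hfactor, sub_nonneg]

end IncrementRatio

theorem discrete_lhospital_monotone_rule_mirror_strengthened_general
    (a b : ℤ) (hab : a ≤ b) (f g : ℤ → ℝ)
    (hgsign : ∀ n m : ℤ, a ≤ n → n ≤ b → a ≤ m → m ≤ b → 0 < g n * g m)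
    (hρ : ∀ n : ℤ, a + 1 ≤ n → n + 1 ≤ b →
      (f n - f (n - 1)) / (g n - g (n - 1)) ≤ (f (n + 1) - f n) / (g (n + 1) - g n))
    (hgΔg : ∀ n : ℤ, a + 1 ≤ n → n ≤ b → 0 < g n * (g n - g (n - 1))) :
    ∃ l : ℤ, a ≤ l ∧ l ≤ b ∧
      (∀ n : ℤ, a + 1 ≤ n → n ≤ l → f n / g n - f (n - 1) / g (n - 1) < 0) ∧
      (∀ n : ℤ, l + 1 ≤ n → n ≤ b → 0 ≤ f n / g n - f (n - 1) / g (n - 1)) := by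
  have hgg : ∀ n, a + 1 ≤ n → n ≤ b → 0 < g n * g (n - 1) := fun n h₁ h₂ =>
    hgsign n (n - 1) (by omega) h₂ (by omega) (by omega)
  have hstep : ∀ n, a + 1 ≤ n → n + 1 ≤ b → 0 ≤ f n / g n - f (n - 1) / g (n - 1) →
      0 ≤ f (n + 1) / g (n + 1) - f (n + 1 - 1) / g (n + 1 - 1) := by
    intro n h₁ h₂ hn
    have hr_le_ρ := (div_sub_div_nonneg_iff_le_sub_div_sub_right
      (hgΔg n h₁ (by omega)) (hgg n h₁ (by omega))).1 hn
    rw [div_sub_div_nonneg_iff_le_sub_div_sub_left (hgΔg (n + 1) (by omega) h₂)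
      (hgg (n + 1) (by omega) h₂), add_sub_cancel_right]
    exact hr_le_ρ.trans (hρ n h₁ h₂)
  obtain ⟨l, hal, hlb, hbelow, habove⟩ := Int.exists_threshold_of_succ hab hstep
  exact ⟨l, hal, hlb, fun n h₁ h₂ => not_le.1 (hbelow n h₁ h₂), habove⟩

/-- Mirror strengthened form of the first case of the discrete monotonicity rule. -/
theorem discrete_lhospital_monotone_rule_mirror_strengthened
    (a b : ℤ) (hab : a ≤ b) (f g : ℤ → ℝ)
    (hg : ∀ n : ℤ, a ≤ n → n ≤ b → g n ≠ 0)
    (hgsign : ∀ n m : ℤ, a ≤ n → n ≤ b → a ≤ m → m ≤ b → 0 < g n * g m)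
    (hΔg : ∀ n : ℤ, a + 1 ≤ n → n ≤ b → g n - g (n - 1) ≠ 0)
    (hΔgsign : ∀ n m : ℤ, a + 1 ≤ n → n ≤ b → a + 1 ≤ m → m ≤ b →
      0 < (g n - g (n - 1)) * (g m - g (m - 1)))
    (hρ : ∀ n : ℤ, a + 1 ≤ n → n + 1 ≤ b →
      (f n - f (n - 1)) / (g n - g (n - 1)) ≤ (f (n + 1) - f n) / (g (n + 1) - g n))
    (hgΔg : ∀ n : ℤ, a + 1 ≤ n → n ≤ b → 0 < g n * (g n - g (n - 1))) :
    ∃ l : ℤ, a ≤ l ∧ l ≤ b ∧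
      (∀ n : ℤ, a + 1 ≤ n → n ≤ l → f n / g n - f (n - 1) / g (n - 1) < 0) ∧
      (∀ n : ℤ, l + 1 ≤ n → n ≤ b → 0 ≤ f n / g n - f (n - 1) / g (n - 1)) :=
  discrete_lhospital_monotone_rule_mirror_strengthened_general a b hab f g hgsign hρ hgΔg
end

section
/- Strict version of the first case of the discrete monotonicity rule: if ρ is strictly increasing on [a+1,b] (ρ(n) < ρ(n+1) whenever a+1 ≤ n ≤ n+1 ≤ b) and g(n)·Δg(n) > 0 for all n ∈ [a+1,b], then there exists k ∈ [a,b] such that r is strictly decreasing on [a,k] (r(n−1) > r(n) for all n with a+1 ≤ n ≤ k) and strictly increasing on [k+1,b] (r(n−1) < r(n) for all n with k+2 ≤ n ≤ b). -/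
/-!
Write `r n = f n / g n` and `ρ n = Δf n / Δg n`. Since `f n = f (n-1) + Δf n` and
`g n = g (n-1) + Δg n` with `g (n-1)` and `Δg n` of the sign of `g n`, the ratio `r n` is a
mediant of `r (n-1)` and `ρ n`: it lies between them. Hence once `r (n-1) ≤ r n` we get
`r n ≤ ρ n < ρ (n+1)`, and then `r n < r (n+1)`. So after the first non-descent `r` increases
strictly; `k` is the index just before the first non-descent.
-/

section Mediant

variable {𝕜 : Type*} [Field 𝕜] {x₀ x₁ y₀ y₁ : 𝕜}

theorem div_sub_div_eq_mul_sub_div_sub_sub_div (h₀ : x₀ ≠ 0) (h₁ : x₁ ≠ 0) (h : x₁ - x₀ ≠ 0) :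
    y₁ / x₁ - y₀ / x₀ = (x₁ - x₀) / x₁ * ((y₁ - y₀) / (x₁ - x₀) - y₀ / x₀) := by
  field_simp
  ring

theorem sub_div_sub_sub_div_eq_mul_sub_div_sub_sub_div (h₀ : x₀ ≠ 0) (h₁ : x₁ ≠ 0)
    (h : x₁ - x₀ ≠ 0) :
    (y₁ - y₀) / (x₁ - x₀) - y₁ / x₁ = x₀ / x₁ * ((y₁ - y₀) / (x₁ - x₀) - y₀ / x₀) := by
  field_simp
  ring

variable [LinearOrder 𝕜] [IsStrictOrderedRing 𝕜]

theorem div_le_div_iff_div_le_sub_div_sub (h₀ : x₀ ≠ 0) (h : 0 < x₁ * (x₁ - x₀)) :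
    y₀ / x₀ ≤ y₁ / x₁ ↔ y₀ / x₀ ≤ (y₁ - y₀) / (x₁ - x₀) := by
  have hc : 0 < (x₁ - x₀) / x₁ := div_pos_iff.2 (mul_pos_iff.1 (mul_comm x₁ _ ▸ h))
  rw [← sub_nonneg, ← sub_nonneg (b := y₀ / x₀),
    div_sub_div_eq_mul_sub_div_sub_sub_div h₀ (left_ne_zero_of_mul h.ne')
      (right_ne_zero_of_mul h.ne'), mul_nonneg_iff_of_pos_left hc]

theorem div_lt_div_iff_div_lt_sub_div_sub (h₀ : x₀ ≠ 0) (h : 0 < x₁ * (x₁ - x₀)) :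
    y₀ / x₀ < y₁ / x₁ ↔ y₀ / x₀ < (y₁ - y₀) / (x₁ - x₀) := by
  have hc : 0 < (x₁ - x₀) / x₁ := div_pos_iff.2 (mul_pos_iff.1 (mul_comm x₁ _ ▸ h))
  rw [← sub_pos, ← sub_pos (b := y₀ / x₀),
    div_sub_div_eq_mul_sub_div_sub_sub_div h₀ (left_ne_zero_of_mul h.ne')
      (right_ne_zero_of_mul h.ne'), mul_pos_iff_of_pos_left hc]

theorem div_le_sub_div_sub_iff (h₀ : 0 < x₀ * x₁) (h : x₁ - x₀ ≠ 0) :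
    y₀ / x₀ ≤ (y₁ - y₀) / (x₁ - x₀) ↔ y₁ / x₁ ≤ (y₁ - y₀) / (x₁ - x₀) := by
  have hc : 0 < x₀ / x₁ := div_pos_iff.2 (mul_pos_iff.1 h₀)
  rw [← sub_nonneg, ← sub_nonneg (a := (y₁ - y₀) / (x₁ - x₀)),
    sub_div_sub_sub_div_eq_mul_sub_div_sub_sub_div (left_ne_zero_of_mul h₀.ne')
      (right_ne_zero_of_mul h₀.ne') h, mul_nonneg_iff_of_pos_left hc]

end Mediant

section Valley

variable {α : Type*} [LinearOrder α] {u : ℤ → α} {a b : ℤ}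

theorem sub_one_lt_of_le_imp_lt
    (hu : ∀ n, a + 1 ≤ n → n + 1 ≤ b → u (n - 1) ≤ u n → u n < u (n + 1))
    {n₀ : ℤ} (hn₀ : a + 1 ≤ n₀) (hle : u (n₀ - 1) ≤ u n₀) :
    ∀ m, n₀ + 1 ≤ m → m ≤ b → u (m - 1) < u m := by
  intro m hm
  induction m, hm using Int.leInduction with
  | base => intro hb; simpa using hu n₀ hn₀ hb hle
  | succ m hm ih =>
    intro hb
    simpa using hu m (by omega) hb (ih (by omega)).le

theorem exists_valley_of_le_imp_lt (hab : a ≤ b)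
    (hu : ∀ n, a + 1 ≤ n → n + 1 ≤ b → u (n - 1) ≤ u n → u n < u (n + 1)) :
    ∃ k, a ≤ k ∧ k ≤ b ∧ (∀ n, a + 1 ≤ n → n ≤ k → u n < u (n - 1)) ∧
      ∀ n, k + 2 ≤ n → n ≤ b → u (n - 1) < u n := by
  by_cases hE : ∃ n, (a + 1 ≤ n ∧ n ≤ b) ∧ u (n - 1) ≤ u n
  · obtain ⟨n₀, ⟨⟨hn₀a, hn₀b⟩, hle⟩, hleast⟩ :=
      Int.exists_least_of_bdd ⟨a + 1, fun z hz => hz.1.1⟩ hE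
    refine ⟨n₀ - 1, by omega, by omega, fun n hna hnk => ?_, fun n hn hnb => ?_⟩
    · exact lt_of_not_ge fun h => by have := hleast n ⟨⟨hna, by omega⟩, h⟩; omega
    · exact sub_one_lt_of_le_imp_lt hu hn₀a hle n (by omega) hnb
  · push Not at hE
    exact ⟨b, hab, le_rfl, fun n hna hnb => hE n ⟨hna, hnb⟩, fun n hn hnb => by omega⟩

end Valley

theorem discrete_lhospital_monotone_rule_strict_general
    (a b : ℤ) (hab : a ≤ b) (f g : ℤ → ℝ)
    (hgsign : ∀ n m : ℤ, a ≤ n → n ≤ b → a ≤ m → m ≤ b → 0 < g n * g m)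
    (hρ : ∀ n : ℤ, a + 1 ≤ n → n + 1 ≤ b →
      (f n - f (n - 1)) / (g n - g (n - 1)) < (f (n + 1) - f n) / (g (n + 1) - g n))
    (hgΔg : ∀ n : ℤ, a + 1 ≤ n → n ≤ b → 0 < g n * (g n - g (n - 1))) :
    ∃ k : ℤ, a ≤ k ∧ k ≤ b ∧
      (∀ n : ℤ, a + 1 ≤ n → n ≤ k → f n / g n < f (n - 1) / g (n - 1)) ∧
      (∀ n : ℤ, k + 2 ≤ n → n ≤ b → f (n - 1) / g (n - 1) < f n / g n) := by
  refine exists_valley_of_le_imp_lt (u := fun n => f n / g n) hab fun n hna hnb hle => ?_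
  have hg : ∀ m, a ≤ m → m ≤ b → g m ≠ 0 := fun m hma hmb =>
    left_ne_zero_of_mul (hgsign m m hma hmb hma hmb).ne'
  have hΔg := right_ne_zero_of_mul (hgΔg n hna (by omega)).ne'
  have hρn : f n / g n ≤ (f n - f (n - 1)) / (g n - g (n - 1)) :=
    (div_le_sub_div_sub_iff (hgsign (n - 1) n (by omega) (by omega) (by omega) (by omega)) hΔg).1
      ((div_le_div_iff_div_le_sub_div_sub (hg (n - 1) (by omega) (by omega))
        (hgΔg n hna (by omega))).1 hle)
  have hsucc := hgΔg (n + 1) (by omega) hnb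
  rw [add_sub_cancel_right] at hsucc
  exact (div_lt_div_iff_div_lt_sub_div_sub (hg n (by omega) (by omega)) hsucc).2
    (hρn.trans_lt (hρ n hna hnb))

/-- Strict version of the first case of the discrete monotonicity rule. -/
theorem discrete_lhospital_monotone_rule_strict
    (a b : ℤ) (hab : a ≤ b) (f g : ℤ → ℝ)
    (hg : ∀ n : ℤ, a ≤ n → n ≤ b → g n ≠ 0)
    (hgsign : ∀ n m : ℤ, a ≤ n → n ≤ b → a ≤ m → m ≤ b → 0 < g n * g m)
    (hΔg : ∀ n : ℤ, a + 1 ≤ n → n ≤ b → g n - g (n - 1) ≠ 0)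
    (hΔgsign : ∀ n m : ℤ, a + 1 ≤ n → n ≤ b → a + 1 ≤ m → m ≤ b →
      0 < (g n - g (n - 1)) * (g m - g (m - 1)))
    (hρ : ∀ n : ℤ, a + 1 ≤ n → n + 1 ≤ b →
      (f n - f (n - 1)) / (g n - g (n - 1)) < (f (n + 1) - f n) / (g (n + 1) - g n))
    (hgΔg : ∀ n : ℤ, a + 1 ≤ n → n ≤ b → 0 < g n * (g n - g (n - 1))) :
    ∃ k : ℤ, a ≤ k ∧ k ≤ b ∧
      (∀ n : ℤ, a + 1 ≤ n → n ≤ k → f n / g n < f (n - 1) / g (n - 1)) ∧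
      (∀ n : ℤ, k + 2 ≤ n → n ≤ b → f (n - 1) / g (n - 1) < f n / g n) :=
  discrete_lhospital_monotone_rule_strict_general a b hab f g hgsign hρ hgΔg
end

section
/- Discrimination between the monotonicity patterns: suppose ρ is nondecreasing on [a+1,b] and g(n)·Δg(n) > 0 for all n ∈ [a+1,b]. Then (i) if r(a+1) > r(a), then r is strictly increasing on the entire interval [a,b] (r(n−1) < r(n) for all n with a+1 ≤ n ≤ b); and (ii) if r(b) < r(b−1) (assuming a ≤ b−1), then r is strictly decreasing on the entire interval [a,b] (r(n−1) > r(n) for all n with a+1 ≤ n ≤ b). -/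
/-- Discrimination between the monotonicity patterns of r = f/g in the case
ρ nondecreasing and g·Δg > 0. -/
theorem discrete_lhospital_monotone_rule_discrimination
    (a b : ℤ) (hab : a ≤ b) (f g : ℤ → ℝ)
    (hg : ∀ n : ℤ, a ≤ n → n ≤ b → g n ≠ 0)
    (hgsign : ∀ n m : ℤ, a ≤ n → n ≤ b → a ≤ m → m ≤ b → 0 < g n * g m)
    (hΔg : ∀ n : ℤ, a + 1 ≤ n → n ≤ b → g n - g (n - 1) ≠ 0)
    (hΔgsign : ∀ n m : ℤ, a + 1 ≤ n → n ≤ b → a + 1 ≤ m → m ≤ b →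
      0 < (g n - g (n - 1)) * (g m - g (m - 1)))
    (hρ : ∀ n : ℤ, a + 1 ≤ n → n + 1 ≤ b →
      (f n - f (n - 1)) / (g n - g (n - 1)) ≤ (f (n + 1) - f n) / (g (n + 1) - g n))
    (hgΔg : ∀ n : ℤ, a + 1 ≤ n → n ≤ b → 0 < g n * (g n - g (n - 1))) :
    (f a / g a < f (a + 1) / g (a + 1) →
      ∀ n : ℤ, a + 1 ≤ n → n ≤ b → f (n - 1) / g (n - 1) < f n / g n) ∧
    (a ≤ b - 1 → f b / g b < f (b - 1) / g (b - 1) →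
      ∀ n : ℤ, a + 1 ≤ n → n ≤ b → f n / g n < f (n - 1) / g (n - 1)) := by
  -- positivity of g(n-1) * Δg(n)
  have hgΔg' : ∀ n : ℤ, a + 1 ≤ n → n ≤ b → 0 < g (n - 1) * (g n - g (n - 1)) := by
    intro n h1 h2
    have h3 := hgsign (n - 1) n (by linarith) (by linarith) (by linarith) h2
    have h4 := hgΔg n h1 h2
    nlinarith [mul_pos h3 h4]
  -- identity A: Δr(n) = (Δg/g n) * (ρ(n) - r(n-1))
  have idA : ∀ n : ℤ, a + 1 ≤ n → n ≤ b →
      f n / g n - f (n - 1) / g (n - 1)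
        = ((g n - g (n - 1)) / g n) *
          ((f n - f (n - 1)) / (g n - g (n - 1)) - f (n - 1) / g (n - 1)) := by
    intro n h1 h2
    have hgn := hg n (by linarith) h2
    have hgn1 := hg (n - 1) (by linarith) (by linarith)
    have hd := hΔg n h1 h2
    field_simp
    ring
  -- identity B: Δr(n) = (Δg/g(n-1)) * (ρ(n) - r(n))
  have idB : ∀ n : ℤ, a + 1 ≤ n → n ≤ b →
      f n / g n - f (n - 1) / g (n - 1)
        = ((g n - g (n - 1)) / g (n - 1)) *
          ((f n - f (n - 1)) / (g n - g (n - 1)) - f n / g n) := by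
    intro n h1 h2
    have hgn := hg n (by linarith) h2
    have hgn1 := hg (n - 1) (by linarith) (by linarith)
    have hd := hΔg n h1 h2
    field_simp
    ring
  -- positivity of the coefficients
  have cA : ∀ n : ℤ, a + 1 ≤ n → n ≤ b → 0 < (g n - g (n - 1)) / g n := by
    intro n h1 h2
    have hgn := hg n (by linarith) h2
    have h4 := hgΔg n h1 h2
    have : (g n - g (n - 1)) / g n = (g n * (g n - g (n - 1))) / (g n ^ 2) := by
      field_simp
    rw [this]
    exact div_pos h4 (by positivity)
  have cB : ∀ n : ℤ, a + 1 ≤ n → n ≤ b → 0 < (g n - g (n - 1)) / g (n - 1) := by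
    intro n h1 h2
    have hgn1 := hg (n - 1) (by linarith) (by linarith)
    have h4 := hgΔg' n h1 h2
    have : (g n - g (n - 1)) / g (n - 1) = (g (n - 1) * (g n - g (n - 1))) / (g (n - 1) ^ 2) := by
      field_simp
    rw [this]
    exact div_pos h4 (by positivity)
  -- sign equivalences
  have signA : ∀ n : ℤ, a + 1 ≤ n → n ≤ b →
      (f (n - 1) / g (n - 1) < f n / g n ↔
        f (n - 1) / g (n - 1) < (f n - f (n - 1)) / (g n - g (n - 1))) := by
    intro n h1 h2
    have hid := idA n h1 h2
    have hc := cA n h1 h2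
    constructor <;> intro h
    · nlinarith
    · nlinarith [mul_pos hc (sub_pos.mpr h)]
  have signB : ∀ n : ℤ, a + 1 ≤ n → n ≤ b →
      (f (n - 1) / g (n - 1) < f n / g n ↔
        f n / g n < (f n - f (n - 1)) / (g n - g (n - 1))) := by
    intro n h1 h2
    have hid := idB n h1 h2
    have hc := cB n h1 h2
    constructor <;> intro h
    · nlinarith
    · nlinarith [mul_pos hc (sub_pos.mpr h)]
  constructor
  · -- increasing case
    intro hstart
    refine Int.le_induction ?_ ?_
    · intro _
      have h : a + 1 - 1 = a := by ring
      rw [h]; exact hstart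
    · intro n hn ih hnb
      have hnb' : n ≤ b := by linarith
      have h0 : f (n - 1) / g (n - 1) < f n / g n := ih hnb'
      have h1 : f n / g n < (f n - f (n - 1)) / (g n - g (n - 1)) :=
        (signB n hn hnb').mp h0
      have h2 := hρ n hn hnb
      have h3 : f n / g n < (f (n + 1) - f n) / (g (n + 1) - g n) := lt_of_lt_of_le h1 h2
      have h4 := (signA (n + 1) (by linarith) hnb).mpr
      have h5 : n + 1 - 1 = n := by ring
      rw [h5] at h4 ⊢
      exact h4 h3
  · -- decreasing case
    intro hb1 hend
    have key : ∀ n : ℤ, n ≤ b → a + 1 ≤ n → f n / g n < f (n - 1) / g (n - 1) := by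
      refine Int.le_induction_down ?_ ?_
      · intro _; exact hend
      · intro n hn ih h1
        have hn1 : a + 1 ≤ n := by linarith
        have h0 : f n / g n < f (n - 1) / g (n - 1) := ih hn1
        -- from signA at n: rho(n) < r(n-1)
        have h2 : (f n - f (n - 1)) / (g n - g (n - 1)) < f (n - 1) / g (n - 1) := by
          by_contra hc
          push_neg at hc
          have hid := idA n hn1 hn
          have hcA := cA n hn1 hn
          nlinarith [mul_nonneg hcA.le (sub_nonneg.mpr hc)]
        have h3 := hρ (n - 1) h1 (by linarith)
        have h5 : n - 1 + 1 = n := by ring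
        rw [h5] at h3
        have h4 : (f (n - 1) - f (n - 1 - 1)) / (g (n - 1) - g (n - 1 - 1))
            < f (n - 1) / g (n - 1) := lt_of_le_of_lt h3 h2
        have hid := idB (n - 1) h1 (by linarith)
        have hcB := cB (n - 1) h1 (by linarith)
        nlinarith [mul_pos hcB (sub_pos.mpr h4)]
    intro n hA hB
    exact key n hB hA
end

section
/- Discrete l'Hospital monotonicity rule in the special case of vanishing at +∞ (nondecreasing version): if ρ is nondecreasing on [a+1,∞) (ρ(n) ≤ ρ(n+1) for all n ≥ a+1), then r is nondecreasing on [a,∞) (r(n−1) ≤ r(n) for all n ≥ a+1). -/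
/-!
If `Δg > 0` (otherwise replace `f, g` by `-f, -g`), then `g` increases to `0`, so `g < 0`.
For `c := ρ(n + 1)` the monotonicity of `ρ` gives `Δf ≥ c Δg` beyond `n`, so `f - c g` increases
to `0` and hence `f n ≤ ρ(n + 1) g n ≤ ρ(n) g n`. Cross-multiplying, this says exactly
`r(n - 1) ≤ r(n)`, since `(f(n - 1), g(n - 1)) = (f n, g n) - (Δf n, Δg n)`.
-/

open Filter Set Topology

noncomputable def discreteSlope (f g : ℤ → ℝ) (n : ℤ) : ℝ :=
  (f n - f (n - 1)) / (g n - g (n - 1))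

lemma discreteSlope_neg (f g : ℤ → ℝ) : discreteSlope (-f) (-g) = discreteSlope f g := by
  ext n
  rw [discreteSlope, discreteSlope, Pi.neg_apply, Pi.neg_apply, Pi.neg_apply, Pi.neg_apply,
    neg_sub_neg, neg_sub_neg, ← neg_sub (f n), ← neg_sub (g n), neg_div_neg_eq]

lemma discreteSlope_add_one (f g : ℤ → ℝ) (n : ℤ) :
    discreteSlope f g (n + 1) = (f (n + 1) - f n) / (g (n + 1) - g n) := by
  rw [discreteSlope, add_sub_cancel_right]

lemma forall_pos_or_forall_neg_of_mul_pos {ι R : Type*} [Ring R] [LinearOrder R]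
    [IsStrictOrderedRing R] {p : ι → Prop} {u : ι → R} {i₀ : ι}
    (h : ∀ i j, p i → p j → 0 < u i * u j) (hi₀ : p i₀) :
    (∀ i, p i → 0 < u i) ∨ (∀ i, p i → u i < 0) := by
  rcases lt_or_gt_of_ne (mul_self_pos.mp (h i₀ i₀ hi₀ hi₀)) with hneg | hpos
  · exact .inr fun i hi => neg_of_mul_pos_right (h i₀ i hi₀ hi) hneg.le
  · exact .inl fun i hi => pos_of_mul_pos_right (h i₀ i hi₀ hi) hpos.le

lemma MonotoneOn.le_of_tendsto_Ici {α β : Type*} [TopologicalSpace α] [Preorder α]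
    [ClosedIciTopology α] [Preorder β] [IsDirectedOrder β] {f : β → α} {b : β} {l : α}
    (hf : MonotoneOn f (Ici b)) (hl : Tendsto f atTop (𝓝 l)) : f b ≤ l :=
  haveI : Nonempty β := ⟨b⟩
  ge_of_tendsto hl ((eventually_ge_atTop b).mono fun _ hx => hf (mem_Ici.mpr le_rfl) hx hx)

lemma StrictMonoOn.lt_of_tendsto_Ici {α β : Type*} [TopologicalSpace α] [Preorder α]
    [ClosedIciTopology α] [PartialOrder β] [IsDirectedOrder β] [NoMaxOrder β] {f : β → α} {b : β}
    {l : α} (hf : StrictMonoOn f (Ici b)) (hl : Tendsto f atTop (𝓝 l)) : f b < l := by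
  obtain ⟨c, hbc⟩ := exists_gt b
  have hc : MonotoneOn f (Ici c) := hf.monotoneOn.mono (Ici_subset_Ici.mpr hbc.le)
  exact (hf (mem_Ici.mpr le_rfl) hbc.le hbc).trans_le (hc.le_of_tendsto_Ici hl)

lemma Int.monotoneOn_Ici_of_le_add_one {α : Type*} [Preorder α] {f : ℤ → α} {n : ℤ}
    (hf : ∀ k, n ≤ k → f k ≤ f (k + 1)) : MonotoneOn f (Ici n) :=
  monotoneOn_of_le_succ ordConnected_Ici fun k _ hk _ => by simpa using hf k hk

lemma Int.strictMonoOn_Ici_of_lt_add_one {α : Type*} [Preorder α] {f : ℤ → α} {n : ℤ}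
    (hf : ∀ k, n ≤ k → f k < f (k + 1)) : StrictMonoOn f (Ici n) :=
  strictMonoOn_of_lt_succ ordConnected_Ici fun k _ hk _ => by simpa using hf k hk

lemma le_mul_of_tendsto_zero_of_mul_sub_le_sub {f g : ℤ → ℝ} {c : ℝ} {n : ℤ}
    (hstep : ∀ k, n ≤ k → c * (g (k + 1) - g k) ≤ f (k + 1) - f k)
    (hf0 : Tendsto f atTop (𝓝 0)) (hg0 : Tendsto g atTop (𝓝 0)) : f n ≤ c * g n := by
  have hmono : MonotoneOn (fun k => f k - c * g k) (Ici n) :=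
    Int.monotoneOn_Ici_of_le_add_one fun k hk => by linarith [hstep k hk]
  have hlim : Tendsto (fun k => f k - c * g k) atTop (𝓝 0) := by
    simpa using hf0.sub (hg0.const_mul c)
  linarith [hmono.le_of_tendsto_Ici hlim]

lemma div_le_div_of_le_slope_mul {x₀ x₁ y₀ y₁ : ℝ} (hy : y₀ < y₁) (hy₁ : y₁ < 0)
    (h : x₁ ≤ (x₁ - x₀) / (y₁ - y₀) * y₁) : x₀ / y₀ ≤ x₁ / y₁ := by
  rw [div_mul_eq_mul_div, le_div_iff₀ (sub_pos.mpr hy)] at h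
  rw [← neg_div_neg_eq x₀, ← neg_div_neg_eq x₁, div_le_div_iff₀ (by linarith) (by linarith)]
  linarith

theorem monotoneOn_div_of_monotoneOn_discreteSlope {a : ℤ} {f g : ℤ → ℝ}
    (hg : ∀ k, a ≤ k → g k < g (k + 1)) (hf0 : Tendsto f atTop (𝓝 0))
    (hg0 : Tendsto g atTop (𝓝 0)) (hρ : MonotoneOn (discreteSlope f g) (Ici (a + 1))) :
    MonotoneOn (fun n => f n / g n) (Ici a) := by
  refine Int.monotoneOn_Ici_of_le_add_one fun n hn => ?_
  have hg_neg : g (n + 1) < 0 :=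
    (Int.strictMonoOn_Ici_of_lt_add_one fun k hk => hg k (by omega)).lt_of_tendsto_Ici hg0
  have hslope_le : discreteSlope f g (n + 1) ≤ discreteSlope f g (n + 1 + 1) :=
    hρ (mem_Ici.mpr (by omega)) (mem_Ici.mpr (by omega)) (by omega)
  have hkey : f (n + 1) ≤ discreteSlope f g (n + 1 + 1) * g (n + 1) := by
    refine le_mul_of_tendsto_zero_of_mul_sub_le_sub (fun k hk => ?_) hf0 hg0
    have hle : discreteSlope f g (n + 1 + 1) ≤ discreteSlope f g (k + 1) :=
      hρ (mem_Ici.mpr (by omega)) (mem_Ici.mpr (by omega)) (by omega)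
    rwa [discreteSlope_add_one f g k, le_div_iff₀ (sub_pos.mpr (hg k (by omega)))] at hle
  refine div_le_div_of_le_slope_mul (hg n hn) hg_neg (hkey.trans ?_)
  rw [← discreteSlope_add_one]
  exact mul_le_mul_of_nonpos_right hslope_le hg_neg.le

theorem discrete_lhospital_vanishing_at_infty_nondecreasing_general
    (a : ℤ) (f g : ℤ → ℝ)
    (hΔgsign : ∀ n m : ℤ, a + 1 ≤ n → a + 1 ≤ m →
      0 < (g n - g (n - 1)) * (g m - g (m - 1)))
    (hf0 : Tendsto f atTop (nhds 0))
    (hg0 : Tendsto g atTop (nhds 0))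
    (hρ : ∀ n : ℤ, a + 1 ≤ n →
      (f n - f (n - 1)) / (g n - g (n - 1)) ≤ (f (n + 1) - f n) / (g (n + 1) - g n)) :
    ∀ n : ℤ, a + 1 ≤ n → f (n - 1) / g (n - 1) ≤ f n / g n := by
  intro n hn
  suffices hr : MonotoneOn (fun n => f n / g n) (Ici a) from
    hr (mem_Ici.mpr (by omega)) (mem_Ici.mpr (by omega)) (by omega)
  have hslope : MonotoneOn (discreteSlope f g) (Ici (a + 1)) :=
    Int.monotoneOn_Ici_of_le_add_one fun k hk => by simpa [discreteSlope] using hρ k hk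
  rcases forall_pos_or_forall_neg_of_mul_pos hΔgsign (le_refl (a + 1)) with hpos | hneg
  · refine monotoneOn_div_of_monotoneOn_discreteSlope (fun k hk => ?_) hf0 hg0 hslope
    simpa using hpos (k + 1) (by omega)
  · have hr := monotoneOn_div_of_monotoneOn_discreteSlope (f := -f) (g := -g)
      (fun k (hk : a ≤ k) => by simpa using hneg (k + 1) (by omega))
      (by rw [← neg_zero]; exact hf0.neg) (by rw [← neg_zero]; exact hg0.neg)
      (by rwa [discreteSlope_neg])
    simpa only [Pi.neg_apply, neg_div_neg_eq] using hr

/-- Discrete l'Hospital monotonicity rule in the special case of vanishing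
at +∞, nondecreasing version. -/
theorem discrete_lhospital_vanishing_at_infty_nondecreasing
    (a : ℤ) (f g : ℤ → ℝ)
    (hg : ∀ n : ℤ, a ≤ n → g n ≠ 0)
    (hgsign : ∀ n m : ℤ, a ≤ n → a ≤ m → 0 < g n * g m)
    (hΔg : ∀ n : ℤ, a + 1 ≤ n → g n - g (n - 1) ≠ 0)
    (hΔgsign : ∀ n m : ℤ, a + 1 ≤ n → a + 1 ≤ m →
      0 < (g n - g (n - 1)) * (g m - g (m - 1)))
    (hf0 : Tendsto f atTop (nhds 0))
    (hg0 : Tendsto g atTop (nhds 0))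
    (hρ : ∀ n : ℤ, a + 1 ≤ n →
      (f n - f (n - 1)) / (g n - g (n - 1)) ≤ (f (n + 1) - f n) / (g (n + 1) - g n)) :
    ∀ n : ℤ, a + 1 ≤ n → f (n - 1) / g (n - 1) ≤ f n / g n :=
  discrete_lhospital_vanishing_at_infty_nondecreasing_general a f g hΔgsign hf0 hg0 hρ
end

section
/- Discrete l'Hospital monotonicity rule in the special case of vanishing at +∞ (strict version): if ρ is strictly increasing on [a+1,∞) (ρ(n) < ρ(n+1) for all n ≥ a+1), then r is strictly increasing on [a,∞) (r(n−1) < r(n) for all n ≥ a+1). -/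
open Filter

/-- Discrete l'Hospital monotonicity rule in the special case of vanishing
at +∞, strict version. -/
theorem discrete_lhospital_vanishing_at_infty_strict
    (a : ℤ) (f g : ℤ → ℝ)
    (hg : ∀ n : ℤ, a ≤ n → g n ≠ 0)
    (hgsign : ∀ n m : ℤ, a ≤ n → a ≤ m → 0 < g n * g m)
    (hΔg : ∀ n : ℤ, a + 1 ≤ n → g n - g (n - 1) ≠ 0)
    (hΔgsign : ∀ n m : ℤ, a + 1 ≤ n → a + 1 ≤ m →
      0 < (g n - g (n - 1)) * (g m - g (m - 1)))
    (hf0 : Tendsto f atTop (nhds 0))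
    (hg0 : Tendsto g atTop (nhds 0))
    (hρ : ∀ n : ℤ, a + 1 ≤ n →
      (f n - f (n - 1)) / (g n - g (n - 1)) < (f (n + 1) - f n) / (g (n + 1) - g n)) :
    ∀ n : ℤ, a + 1 ≤ n → f (n - 1) / g (n - 1) < f n / g n := by
  intro n hn
  have hgn : g n - g (n - 1) ≠ 0 := hΔg n hn
  set ρn : ℝ := (f n - f (n - 1)) / (g n - g (n - 1)) with hρn
  have hρmul : ρn * (g n - g (n - 1)) = f n - f (n - 1) := div_mul_cancel₀ _ hgn
  set H : ℤ → ℝ := fun m => (g n - g (n - 1)) * (f m - ρn * g m) with hH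
  have hdelta : ∀ k : ℤ, a + 1 ≤ k →
      H k - H (k - 1) = (g n - g (n - 1)) * (g k - g (k - 1)) *
        ((f k - f (k - 1)) / (g k - g (k - 1)) - ρn) := by
    intro k hk
    have hgk : g k - g (k - 1) ≠ 0 := hΔg k hk
    have h1 : (f k - f (k - 1)) / (g k - g (k - 1)) * (g k - g (k - 1)) = f k - f (k - 1) :=
      div_mul_cancel₀ _ hgk
    simp only [hH]
    linear_combination (-(g n - g (n - 1))) * h1
  have key : ∀ m : ℤ, n + 1 ≤ m →
      ρn < (f m - f (m - 1)) / (g m - g (m - 1)) ∧ H (n + 1) ≤ H m := by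
    refine Int.le_induction ?_ ?_
    · simp only [add_sub_cancel_right]
      refine ⟨?_, le_refl _⟩
      rw [hρn]
      exact hρ n hn
    · intro m hm ih
      simp only [add_sub_cancel_right]
      obtain ⟨ih1, ih2⟩ := ih
      have hρm : ρn < (f (m + 1) - f m) / (g (m + 1) - g m) := by
        have := hρ m (by omega)
        exact ih1.trans this
      have hd := hdelta (m + 1) (by omega)
      simp only [add_sub_cancel_right] at hd
      have hpos : 0 < (g n - g (n - 1)) * (g (m + 1) - g m) := by
        have := hΔgsign n (m + 1) hn (by omega)
        simpa using this
      have hstep : 0 < H (m + 1) - H m := by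
        rw [hd]; exact mul_pos hpos (by linarith)
      exact ⟨hρm, by linarith⟩
  have hlim : Tendsto H atTop (nhds 0) := by
    have h2 : Tendsto (fun m : ℤ => (g n - g (n - 1)) * (f m - ρn * g m)) atTop
        (nhds ((g n - g (n - 1)) * (0 - ρn * 0))) :=
      (hf0.sub (hg0.const_mul ρn)).const_mul _
    rw [hH]
    simpa using h2
  have hH1 : H (n + 1) ≤ 0 := by
    refine ge_of_tendsto hlim ?_
    filter_upwards [eventually_ge_atTop (n + 1)] with m hm
    exact (key m hm).2
  have hHn1 : H n < H (n + 1) := by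
    have hd := hdelta (n + 1) (by omega)
    simp only [add_sub_cancel_right] at hd
    have hpos : 0 < (g n - g (n - 1)) * (g (n + 1) - g n) := by
      have := hΔgsign n (n + 1) hn (by omega)
      simpa using this
    have hρ1 : ρn < (f (n + 1) - f n) / (g (n + 1) - g n) := by
      rw [hρn]; exact hρ n hn
    nlinarith [hd, mul_pos hpos (sub_pos.2 hρ1)]
  have h0 : H n - H (n - 1) = 0 := by
    rw [hdelta n hn, ← hρn]
    simp
  have hHm : H (n - 1) < 0 := by linarith [lt_of_lt_of_le hHn1 hH1]
  have hHval : (g n - g (n - 1)) * (f (n - 1) - ρn * g (n - 1)) < 0 := by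
    simpa [hH] using hHm
  have hgg : (0 : ℝ) < g n * g (n - 1) := hgsign n (n - 1) (by omega) (by omega)
  have hid : f n * g (n - 1) - g n * f (n - 1)
      = -((g n - g (n - 1)) * (f (n - 1) - ρn * g (n - 1))) := by
    linear_combination (-(g (n - 1))) * hρmul
  have hnum : 0 < f n * g (n - 1) - g n * f (n - 1) := by
    rw [hid]; linarith
  have hfin : 0 < f n / g n - f (n - 1) / g (n - 1) := by
    rw [div_sub_div _ _ (hg n (by omega)) (hg (n - 1) (by omega))]
    exact div_pos hnum hgg
  linarith
end

section
/- Summation identity for the vanishing-at-infinity case: for every n ≥ a+1, the partial sums ∑_{j=n}^{N} Δg(n)·Δg(j)·(ρ(j) − ρ(n)) converge as N → ∞ to g(n)·g(n−1)·Δr(n); that is, g(n)·g(n−1)·(r(n) − r(n−1)) = lim_{N→∞} ∑_{j=n}^{N} Δg(n)·Δg(j)·(ρ(j) − ρ(n)). -/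
open Filter

/-- Summation identity for the vanishing-at-infinity case:
g(n)·g(n-1)·Δr(n) = ∑_{j=n}^∞ Δg(n)·Δg(j)·(ρ(j) - ρ(n)). -/
theorem summation_identity_vanishing_at_infty
    (a : ℤ) (f g : ℤ → ℝ)
    (hg : ∀ n : ℤ, a ≤ n → g n ≠ 0)
    (hgsign : ∀ n m : ℤ, a ≤ n → a ≤ m → 0 < g n * g m)
    (hΔg : ∀ n : ℤ, a + 1 ≤ n → g n - g (n - 1) ≠ 0)
    (hΔgsign : ∀ n m : ℤ, a + 1 ≤ n → a + 1 ≤ m →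
      0 < (g n - g (n - 1)) * (g m - g (m - 1)))
    (hf0 : Tendsto f atTop (nhds 0))
    (hg0 : Tendsto g atTop (nhds 0)) :
    ∀ n : ℤ, a + 1 ≤ n →
      Tendsto
        (fun N : ℤ => ∑ j ∈ Finset.Icc n N,
          (g n - g (n - 1)) * (g j - g (j - 1)) *
            ((f j - f (j - 1)) / (g j - g (j - 1)) -
              (f n - f (n - 1)) / (g n - g (n - 1))))
        atTop
        (nhds (g n * g (n - 1) * (f n / g n - f (n - 1) / g (n - 1)))) := by
  intro n hn
  have hA : g n - g (n - 1) ≠ 0 := hΔg n hn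
  have hgn : g n ≠ 0 := hg n (by linarith)
  have hgn1 : g (n - 1) ≠ 0 := hg (n - 1) (by linarith)
  -- eventual closed form of the partial sums
  have key : ∀ N : ℤ, n ≤ N →
      (∑ j ∈ Finset.Icc n N,
        (g n - g (n - 1)) * (g j - g (j - 1)) *
          ((f j - f (j - 1)) / (g j - g (j - 1)) -
            (f n - f (n - 1)) / (g n - g (n - 1)))) =
      (g n - g (n - 1)) * (f N - f (n - 1)) -
        (f n - f (n - 1)) * (g N - g (n - 1)) := by
    refine Int.le_induction ?_ ?_
    · rw [Finset.Icc_self, Finset.sum_singleton]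
      field_simp
    · intro N hN ih
      have hins : Finset.Icc n (N + 1) = insert (N + 1) (Finset.Icc n N) := by
        ext x; simp [Finset.mem_Icc, Finset.mem_insert]; omega
      rw [hins, Finset.sum_insert (by simp [Finset.mem_Icc]), ih]
      have h1 : N + 1 - 1 = N := by ring
      rw [h1]
      have hB : g (N + 1) - g N ≠ 0 := by
        have := hΔg (N + 1) (by linarith); rwa [h1] at this
      have hterm : (g n - g (n - 1)) * (g (N + 1) - g N) *
          ((f (N + 1) - f N) / (g (N + 1) - g N) -
            (f n - f (n - 1)) / (g n - g (n - 1))) =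
          (g n - g (n - 1)) * (f (N + 1) - f N) -
            (f n - f (n - 1)) * (g (N + 1) - g N) := by
        field_simp
      rw [hterm]
      ring
  have hlim : Tendsto
      (fun N : ℤ => (g n - g (n - 1)) * (f N - f (n - 1)) -
        (f n - f (n - 1)) * (g N - g (n - 1))) atTop
      (nhds ((g n - g (n - 1)) * (0 - f (n - 1)) -
        (f n - f (n - 1)) * (0 - g (n - 1)))) := by
    exact ((tendsto_const_nhds.mul (hf0.sub tendsto_const_nhds)).sub
      (tendsto_const_nhds.mul (hg0.sub tendsto_const_nhds)))
  have heq : (g n - g (n - 1)) * (0 - f (n - 1)) -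
      (f n - f (n - 1)) * (0 - g (n - 1)) =
      g n * g (n - 1) * (f n / g n - f (n - 1) / g (n - 1)) := by
    field_simp
    ring
  rw [← heq]
  refine hlim.congr' ?_
  filter_upwards [eventually_ge_atTop n] with N hN
  exact (key N hN).symm
end

section
/- Tail sums preserve log-concavity: let a ∈ ℤ and p : ℤ → ℝ with p(n) > 0 for all n ≥ a, p log-concave on [a,∞) (p(n)² ≥ p(n−1)·p(n+1) for all n ≥ a+1), and p summable on [a,∞). Define f(n) := ∑_{j=n}^{∞} p(j) for n ≥ a. Then f is log-concave on [a,∞): f(n)² ≥ f(n−1)·f(n+1) for all n ≥ a+1. -/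
/-- Tail sums preserve log-concavity: if p is positive, log-concave and summable
on [a,∞), then f(n) := ∑_{j=n}^∞ p(j) is log-concave on [a,∞). -/
theorem tail_sums_preserve_log_concavity
    (a : ℤ) (p : ℤ → ℝ)
    (hpos : ∀ n : ℤ, a ≤ n → 0 < p n)
    (hlc : ∀ n : ℤ, a + 1 ≤ n → p (n - 1) * p (n + 1) ≤ p n ^ 2)
    (hsum : Summable fun j : ℕ => p (a + j))
    (f : ℤ → ℝ)
    (hf : ∀ n : ℤ, a ≤ n → f n = ∑' j : ℕ, p (n + j)) :
    ∀ n : ℤ, a + 1 ≤ n → f (n - 1) * f (n + 1) ≤ f n ^ 2 := by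
  have hsum' : ∀ m : ℤ, a ≤ m → Summable (fun j : ℕ => p (m + j)) := by
    intro m hm
    have h := (summable_nat_add_iff (m - a).toNat).mpr hsum
    refine h.congr fun j => ?_
    have : (a : ℤ) + ((j + (m - a).toNat : ℕ) : ℤ) = m + j := by push_cast; omega
    rw [this]
  have hrec : ∀ m : ℤ, a ≤ m → f m = p m + f (m + 1) := by
    intro m hm
    rw [hf m hm, hf (m + 1) (by omega), Summable.tsum_eq_zero_add (hsum' m hm)]
    simp only [Nat.cast_zero, add_zero]
    congr 1
    apply tsum_congr
    intro j
    congr 1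
    push_cast
    ring
  have key : ∀ n : ℤ, a + 1 ≤ n → ∀ j : ℕ,
      p (n - 1) * p (n + 1 + j) ≤ p n * p (n + j) := by
    intro n hn j
    induction j with
    | zero => simpa [pow_two] using hlc n hn
    | succ j ih =>
      have h1 := hlc (n + 1 + j) (by omega)
      rw [show (n + 1 + (j : ℤ)) - 1 = n + j by ring] at h1
      have hp0 : 0 < p (n - 1) := hpos _ (by omega)
      have hp1 : 0 < p (n + 1 + j) := hpos _ (by omega)
      have hp2 : 0 < p (n + 1 + j + 1) := hpos _ (by omega)
      have hp3 : 0 < p n := hpos _ (by omega)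
      have hp4 : 0 < p (n + j) := hpos _ (by omega)
      have goal' : p (n - 1) * p (n + 1 + j + 1) ≤ p n * p (n + 1 + j) := by
        nlinarith [mul_le_mul_of_nonneg_right ih hp2.le,
          mul_le_mul_of_nonneg_left h1 hp3.le]
      calc p (n - 1) * p (n + 1 + ((j : ℕ) + 1 : ℕ)) 
          = p (n - 1) * p (n + 1 + j + 1) := by push_cast; ring_nf
        _ ≤ p n * p (n + 1 + j) := goal'
        _ = p n * p (n + ((j : ℕ) + 1 : ℕ)) := by push_cast; ring_nf
  intro n hn
  have hA := hrec (n - 1) (by omega)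
  rw [show n - 1 + 1 = n by ring] at hA
  have hB := hrec n (by omega)
  have hC : p (n - 1) * f (n + 1) ≤ p n * f n := by
    rw [hf (n + 1) (by omega), hf n (by omega), ← tsum_mul_left, ← tsum_mul_left]
    exact Summable.tsum_le_tsum (fun j => key n hn j)
      ((hsum' (n + 1) (by omega)).mul_left _)
      ((hsum' n (by omega)).mul_left _)
  have e1 : f (n - 1) * f (n + 1) = p (n - 1) * f (n + 1) + f n * f (n + 1) := by
    rw [hA]; ring
  have e2 : f n ^ 2 = p n * f n + f n * f (n + 1) := by
    calc f n ^ 2 = f n * f n := sq (f n) ▸ rfl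
      _ = (p n + f (n + 1)) * f n := by rw [← hB]
      _ = p n * f n + f n * f (n + 1) := by ring
  linarith
end

section
/- Tail sums preserve log-convexity: let a ∈ ℤ and p : ℤ → ℝ with p(n) > 0 for all n ≥ a, p log-convex on [a,∞) (p(n)² ≤ p(n−1)·p(n+1) for all n ≥ a+1), and p summable on [a,∞). Define f(n) := ∑_{j=n}^{∞} p(j) for n ≥ a. Then f is log-convex on [a,∞): f(n)² ≤ f(n−1)·f(n+1) for all n ≥ a+1. -/
/-- Tail sums preserve log-convexity: if p is positive, log-convex and summable
on [a,∞), then f(n) := ∑_{j=n}^∞ p(j) is log-convex on [a,∞). -/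
theorem tail_sums_preserve_log_convexity
    (a : ℤ) (p : ℤ → ℝ)
    (hpos : ∀ n : ℤ, a ≤ n → 0 < p n)
    (hlc : ∀ n : ℤ, a + 1 ≤ n → p n ^ 2 ≤ p (n - 1) * p (n + 1))
    (hsum : Summable fun j : ℕ => p (a + j))
    (f : ℤ → ℝ)
    (hf : ∀ n : ℤ, a ≤ n → f n = ∑' j : ℕ, p (n + j)) :
    ∀ n : ℤ, a + 1 ≤ n → f n ^ 2 ≤ f (n - 1) * f (n + 1) := by
  have hsumm : ∀ m : ℤ, a ≤ m → Summable (fun j : ℕ => p (m + j)) := by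
    intro m hm
    obtain ⟨k, hk⟩ := Int.le.dest hm
    have he : (fun j : ℕ => p (m + j)) = fun j : ℕ => p (a + (j + k : ℕ)) := by
      funext j; congr 1; push_cast; omega
    rw [he]
    exact (summable_nat_add_iff k).mpr hsum
  intro n hn
  have ha1 : a ≤ n - 1 := by omega
  have ha2 : a ≤ n := by omega
  have ha3 : a ≤ n + 1 := by omega
  have hnn : ∀ m : ℤ, a ≤ m → ∀ j : ℕ, 0 < p (m + j) := by
    intro m hm j
    exact hpos _ (le_trans hm (le_add_of_nonneg_right (Int.natCast_nonneg j)))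
  rw [hf n ha2, hf _ ha1, hf _ ha3]
  set A := ∑' j : ℕ, p (n - 1 + j) with hA
  set B := ∑' j : ℕ, p (n + 1 + j) with hB
  -- partial sums bound
  have key : ∀ N : ℕ, (∑ j ∈ Finset.range N, p (n + j)) ^ 2 ≤ A * B := by
    intro N
    have step1 : (∑ j ∈ Finset.range N, p (n + j)) ≤
        ∑ j ∈ Finset.range N, Real.sqrt (p (n - 1 + j)) * Real.sqrt (p (n + 1 + j)) := by
      apply Finset.sum_le_sum
      intro j _
      have h1 := hnn _ ha1 j
      have h3 := hnn _ ha3 j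
      have h2 := hnn _ ha2 j
      have hlcj : p (n + j) ^ 2 ≤ p (n - 1 + j) * p (n + 1 + j) := by
        have := hlc (n + j) (le_trans hn (le_add_of_nonneg_right (Int.natCast_nonneg j)))
        have e1 : n + (j : ℤ) - 1 = n - 1 + j := by ring
        have e2 : n + (j : ℤ) + 1 = n + 1 + j := by ring
        rwa [e1, e2] at this
      rw [← Real.sqrt_mul_self h2.le]
      rw [← Real.sqrt_mul h1.le]
      apply Real.sqrt_le_sqrt
      calc p (n + j) * p (n + j) = p (n + j) ^ 2 := by ring
        _ ≤ _ := hlcj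
    have cs := Finset.sum_mul_sq_le_sq_mul_sq (Finset.range N)
        (fun j => Real.sqrt (p (n - 1 + j))) (fun j => Real.sqrt (p (n + 1 + j)))
    have e1 : ∀ j : ℕ, Real.sqrt (p (n - 1 + j)) ^ 2 = p (n - 1 + j) := fun j =>
      Real.sq_sqrt (hnn _ ha1 j).le
    have e2 : ∀ j : ℕ, Real.sqrt (p (n + 1 + j)) ^ 2 = p (n + 1 + j) := fun j =>
      Real.sq_sqrt (hnn _ ha3 j).le
    simp only [e1, e2] at cs
    have hAle : (∑ j ∈ Finset.range N, p (n - 1 + j)) ≤ A :=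
      Summable.sum_le_tsum _ (fun j _ => (hnn _ ha1 j).le) (hsumm _ ha1)
    have hBle : (∑ j ∈ Finset.range N, p (n + 1 + j)) ≤ B :=
      Summable.sum_le_tsum _ (fun j _ => (hnn _ ha3 j).le) (hsumm _ ha3)
    have hSnn : (0:ℝ) ≤ ∑ j ∈ Finset.range N, p (n + j) :=
      Finset.sum_nonneg fun j _ => (hnn _ ha2 j).le
    have hsqrtnn : (0:ℝ) ≤ ∑ j ∈ Finset.range N, Real.sqrt (p (n - 1 + j)) * Real.sqrt (p (n + 1 + j)) :=
      Finset.sum_nonneg fun j _ => mul_nonneg (Real.sqrt_nonneg _) (Real.sqrt_nonneg _)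
    calc (∑ j ∈ Finset.range N, p (n + j)) ^ 2
        ≤ (∑ j ∈ Finset.range N, Real.sqrt (p (n - 1 + j)) * Real.sqrt (p (n + 1 + j))) ^ 2 :=
          pow_le_pow_left₀ hSnn step1 2
      _ ≤ (∑ j ∈ Finset.range N, p (n - 1 + j)) * (∑ j ∈ Finset.range N, p (n + 1 + j)) := cs
      _ ≤ A * B := mul_le_mul hAle hBle
          (Finset.sum_nonneg fun j _ => (hnn _ ha3 j).le)
          (tsum_nonneg fun j => (hnn _ ha1 j).le)
  have htend : Filter.Tendsto (fun N : ℕ => (∑ j ∈ Finset.range N, p (n + j)) ^ 2)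
      Filter.atTop (nhds ((∑' j : ℕ, p (n + j)) ^ 2)) :=
    ((hsumm _ ha2).hasSum.tendsto_sum_nat).pow 2
  exact le_of_tendsto htend (Filter.Eventually.of_forall key)
end

section
/- The iterated tail-sum operators R^k preserve log-concavity: let k ≥ 1 be a natural number, a ∈ ℤ, and p : ℤ → ℝ with p(n) > 0 for all n ≥ a and p log-concave on [a,∞) (p(n)² ≥ p(n−1)·p(n+1) for all n ≥ a+1). Suppose that for every n ≥ a the series defining (R^k p)(n) := ∑_{m=0}^{∞} C(m+k−1, m)·p(n+m) converges (the family m ↦ C(m+k−1, m)·p(n+m) is summable), where C denotes the binomial coefficient. Then f := R^k p is log-concave on [a,∞): f(n)² ≥ f(n−1)·f(n+1) for all n ≥ a+1. -/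
/-!
Summing the double series by antidiagonals and using the hockey-stick identity
`∑_{i ≤ l} C(i+j, i) = C(l+j+1, l)` gives `R^(j+2) = R ∘ R^(j+1)`, so it suffices to show that
`R` preserves positivity and log-concavity. For `F = R q` we have `F(n-1) = q(n-1) + F(n)` and
`F(n) = q(n) + F(n+1)`, so `F(n-1) F(n+1) ≤ F(n)²` is equivalent to `q(n-1) F(n+1) ≤ q(n) F(n)`.
This holds termwise, `q(n-1) q(n+m+1) ≤ q(n) q(n+m)`, because log-concavity of a positive
sequence makes `q(n+1) / q(n)` nonincreasing.
-/

open Finset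

def LogConcaveFrom (a : ℤ) (q : ℤ → ℝ) : Prop :=
  ∀ n : ℤ, a + 1 ≤ n → q (n - 1) * q (n + 1) ≤ q n ^ 2

/-- The operator `R = R^1`. -/
noncomputable def tailSum (q : ℤ → ℝ) (n : ℤ) : ℝ :=
  ∑' m : ℕ, q (n + m)

/-- `iterTailSum j p` is `R^(j+1) p`; the index is shifted so that no truncated subtraction
appears. -/
noncomputable def iterTailSum (j : ℕ) (p : ℤ → ℝ) (n : ℤ) : ℝ :=
  ∑' m : ℕ, ((m + j).choose m : ℝ) * p (n + m)

namespace LogConcaveFrom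

variable {a : ℤ} {q : ℤ → ℝ}

theorem congr {r : ℤ → ℝ} (hq : LogConcaveFrom a q) (h : ∀ n, a ≤ n → q n = r n) :
    LogConcaveFrom a r := by
  intro n hn
  rw [← h (n - 1) (by linarith), ← h (n + 1) (by linarith), ← h n (by linarith)]
  exact hq n hn

/-- The ratio `q (n + 1) / q n` is nonincreasing, written without division. -/
theorem mul_le_mul_shift (hpos : ∀ n, a ≤ n → 0 < q n) (hq : LogConcaveFrom a q) {n : ℤ}
    (hn : a + 1 ≤ n) (m : ℕ) : q (n - 1) * q (n + m + 1) ≤ q n * q (n + m) := by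
  induction m with
  | zero => simpa [sq] using hq n hn
  | succ m ih =>
    have hlc := hq (n + m + 1) (by linarith [m.cast_nonneg (α := ℤ)])
    rw [add_sub_cancel_right] at hlc
    push_cast
    rw [← add_assoc]
    have hm : 0 < q (n + m) := hpos _ (by linarith [m.cast_nonneg (α := ℤ)])
    have hm1 : 0 < q (n + m + 1) := hpos _ (by linarith [m.cast_nonneg (α := ℤ)])
    refine le_of_mul_le_mul_left ?_ hm
    calc q (n + m) * (q (n - 1) * q (n + m + 1 + 1))
        = q (n - 1) * (q (n + m) * q (n + m + 1 + 1)) := by ring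
      _ ≤ q (n - 1) * q (n + m + 1) ^ 2 :=
        mul_le_mul_of_nonneg_left hlc (hpos _ (by linarith)).le
      _ = q (n + m + 1) * (q (n - 1) * q (n + m + 1)) := by ring
      _ ≤ q (n + m + 1) * (q n * q (n + m)) := mul_le_mul_of_nonneg_left ih hm1.le
      _ = q (n + m) * (q n * q (n + m + 1)) := by ring

end LogConcaveFrom

theorem tailSum_eq_add {q : ℤ → ℝ} {n : ℤ} (hs : Summable fun m : ℕ => q (n + m)) :
    tailSum q n = q n + tailSum q (n + 1) := by
  rw [tailSum, hs.tsum_eq_zero_add, tailSum]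
  push_cast
  simp only [add_zero, add_assoc, add_comm (1 : ℤ)]

theorem logConcaveFrom_tailSum {a : ℤ} {q : ℤ → ℝ} (hpos : ∀ n, a ≤ n → 0 < q n)
    (hq : LogConcaveFrom a q) (hs : ∀ n, a ≤ n → Summable fun m : ℕ => q (n + m)) :
    LogConcaveFrom a (tailSum q) := by
  intro n hn
  have hs' : Summable fun m : ℕ => q (n + 1 + m) := hs (n + 1) (by linarith)
  have key : q (n - 1) * tailSum q (n + 1) ≤ q n * tailSum q n := by
    rw [tailSum, tailSum, ← tsum_mul_left, ← tsum_mul_left]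
    refine (hs'.mul_left _).tsum_le_tsum (fun m => ?_) ((hs n (by linarith)).mul_left _)
    rw [add_right_comm]
    exact hq.mul_le_mul_shift hpos hn m
  have h₁ := tailSum_eq_add (hs (n - 1) (by linarith))
  have h₂ := tailSum_eq_add (hs n (by linarith))
  rw [sub_add_cancel] at h₁
  linear_combination key + tailSum q (n + 1) * h₁ - tailSum q n * h₂

theorem hasSum_of_hasSum_sum_antidiagonal {f : ℕ × ℕ → ℝ} (hf : 0 ≤ f) {s : ℝ}
    (hs : HasSum (fun l => ∑ x ∈ antidiagonal l, f x) s) : HasSum f s := by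
  let e := HasAntidiagonal.sigmaAntidiagonalEquivProd (A := ℕ)
  have hfiber : ∀ l, ∑' x : antidiagonal l, f x = ∑ x ∈ antidiagonal l, f x :=
    fun l => Finset.tsum_subtype _ f
  have hsigma : Summable fun x : (Σ l, antidiagonal l) => f (e x) :=
    (summable_sigma_of_nonneg fun _ => hf _).mpr
      ⟨fun _ => Summable.of_finite, hs.summable.congr fun l => (hfiber l).symm⟩
  convert (e.summable_iff.mp hsigma).hasSum
  rw [← e.tsum_eq, hsigma.tsum_sigma, ← hs.tsum_eq]
  exact (tsum_congr hfiber).symm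

theorem cast_sum_range_add_choose (j l : ℕ) :
    ∑ i ∈ range (l + 1), ((i + j).choose i : ℝ) = ((l + (j + 1)).choose l : ℝ) := by
  simp_rw [Nat.choose_symm_add]
  rw [← Nat.cast_sum, Nat.sum_range_add_choose, Nat.choose_symm_add, add_assoc]

section iterTailSum

variable {a n : ℤ} {p : ℤ → ℝ} {j : ℕ}

theorem iterTailSum_zero : iterTailSum 0 p = tailSum p := by
  funext n
  simp [iterTailSum, tailSum]

theorem hasSum_iterTailSum_succ (hp : ∀ n, a ≤ n → 0 ≤ p n) (hn : a ≤ n)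
    (hs : Summable fun m : ℕ => ((m + (j + 1)).choose m : ℝ) * p (n + m)) :
    HasSum (fun x : ℕ × ℕ => ((x.2 + j).choose x.2 : ℝ) * p (n + x.1 + x.2))
      (iterTailSum (j + 1) p n) := by
  refine hasSum_of_hasSum_sum_antidiagonal (fun x => ?_) (hs.hasSum.congr_fun fun l => ?_)
  · exact mul_nonneg (Nat.cast_nonneg _) (hp _ (by omega))
  calc ∑ x ∈ antidiagonal l, ((x.2 + j).choose x.2 : ℝ) * p (n + x.1 + x.2)
      = ∑ x ∈ antidiagonal l, ((x.2 + j).choose x.2 : ℝ) * p (n + l) :=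
        sum_congr rfl fun x hx => by rw [← mem_antidiagonal.mp hx, Nat.cast_add, add_assoc]
    _ = ∑ i ∈ range (l + 1), ((i + j).choose i : ℝ) * p (n + l) := by
        rw [← Nat.sum_antidiagonal_swap, Nat.sum_antidiagonal_eq_sum_range_succ_mk]; rfl
    _ = ((l + (j + 1)).choose l : ℝ) * p (n + l) := by rw [← sum_mul, cast_sum_range_add_choose]

theorem summable_iterTailSum_shift (hp : ∀ n, a ≤ n → 0 ≤ p n) (hn : a ≤ n)
    (hs : Summable fun m : ℕ => ((m + (j + 1)).choose m : ℝ) * p (n + m)) :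
    Summable fun m : ℕ => iterTailSum j p (n + m) :=
  (hasSum_iterTailSum_succ hp hn hs).summable.prod

theorem iterTailSum_succ (hp : ∀ n, a ≤ n → 0 ≤ p n) (hn : a ≤ n)
    (hs : Summable fun m : ℕ => ((m + (j + 1)).choose m : ℝ) * p (n + m)) :
    iterTailSum (j + 1) p n = tailSum (iterTailSum j p) n :=
  (hasSum_iterTailSum_succ hp hn hs).tsum_eq.symm.trans
    (hasSum_iterTailSum_succ hp hn hs).summable.tsum_prod

theorem summable_choose_mul_of_le {k : ℕ} (hp : ∀ m : ℕ, 0 ≤ p (n + m)) (hjk : j ≤ k)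
    (hs : Summable fun m : ℕ => ((m + k).choose m : ℝ) * p (n + m)) :
    Summable fun m : ℕ => ((m + j).choose m : ℝ) * p (n + m) :=
  hs.of_nonneg_of_le (fun m => mul_nonneg (Nat.cast_nonneg _) (hp m)) fun m =>
    mul_le_mul_of_nonneg_right (by gcongr) (hp m)

theorem iterTailSum_pos (hpos : ∀ n, a ≤ n → 0 < p n) (hn : a ≤ n)
    (hs : Summable fun m : ℕ => ((m + j).choose m : ℝ) * p (n + m)) :
    0 < iterTailSum j p n :=
  hs.tsum_pos (fun m => mul_nonneg (Nat.cast_nonneg _) (hpos _ (by omega)).le) 0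
    (by simpa using hpos n hn)

theorem logConcaveFrom_iterTailSum (hpos : ∀ n, a ≤ n → 0 < p n) (hp : LogConcaveFrom a p) :
    ∀ j : ℕ, (∀ n, a ≤ n → Summable fun m : ℕ => ((m + j).choose m : ℝ) * p (n + m)) →
      LogConcaveFrom a (iterTailSum j p)
  | 0, hs => by
    rw [iterTailSum_zero]
    exact logConcaveFrom_tailSum hpos hp fun n hn => by simpa using hs n hn
  | j + 1, hs => by
    have hnonneg : ∀ n, a ≤ n → 0 ≤ p n := fun n hn => (hpos n hn).le
    have hs' : ∀ n, a ≤ n → Summable fun m : ℕ => ((m + j).choose m : ℝ) * p (n + m) :=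
      fun n hn => summable_choose_mul_of_le (fun m => hnonneg _ (by omega)) j.le_succ (hs n hn)
    have hlc : LogConcaveFrom a (tailSum (iterTailSum j p)) :=
      logConcaveFrom_tailSum (fun n hn => iterTailSum_pos hpos hn (hs' n hn))
        (logConcaveFrom_iterTailSum hpos hp j hs')
        fun n hn => summable_iterTailSum_shift hnonneg hn (hs n hn)
    exact hlc.congr fun n hn => (iterTailSum_succ hnonneg hn (hs n hn)).symm

end iterTailSum

/-- The iterated tail-sum operators R^k preserve log-concavity:
(R^k p)(n) := ∑_{m=0}^∞ C(m+k-1, m)·p(n+m). -/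
theorem Rk_preserves_log_concavity
    (k : ℕ) (hk : 1 ≤ k) (a : ℤ) (p : ℤ → ℝ)
    (hpos : ∀ n : ℤ, a ≤ n → 0 < p n)
    (hlc : ∀ n : ℤ, a + 1 ≤ n → p (n - 1) * p (n + 1) ≤ p n ^ 2)
    (hsum : ∀ n : ℤ, a ≤ n →
      Summable fun m : ℕ => ((m + k - 1).choose m : ℝ) * p (n + m))
    (f : ℤ → ℝ)
    (hf : ∀ n : ℤ, a ≤ n → f n = ∑' m : ℕ, ((m + k - 1).choose m : ℝ) * p (n + m)) :
    ∀ n : ℤ, a + 1 ≤ n → f (n - 1) * f (n + 1) ≤ f n ^ 2 := by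
  obtain ⟨j, rfl⟩ : ∃ j, k = j + 1 := ⟨k - 1, by omega⟩
  simp only [Nat.add_succ_sub_one] at hsum hf
  exact (logConcaveFrom_iterTailSum hpos hlc j hsum).congr fun n hn => (hf n hn).symm
end

section
/- Partial sums of a log-concave positive sequence are strictly log-concave: let p : ℕ → ℝ with p(n) > 0 for all n and p log-concave on [0,∞) (p(n)² ≥ p(n−1)·p(n+1) for all n ≥ 1). Define f(n) := ∑_{j=0}^{n} p(j). Then f is strictly log-concave: f(n)² > f(n−1)·f(n+1) for all n ≥ 1. -/
/-- Partial sums of a log-concave positive sequence are strictly log-concave. -/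
theorem partial_sums_strictly_log_concave
    (p : ℕ → ℝ)
    (hpos : ∀ n : ℕ, 0 < p n)
    (hlc : ∀ n : ℕ, 1 ≤ n → p (n - 1) * p (n + 1) ≤ p n ^ 2)
    (f : ℕ → ℝ)
    (hf : ∀ n : ℕ, f n = ∑ j ∈ Finset.range (n + 1), p j) :
    ∀ n : ℕ, 1 ≤ n → f (n - 1) * f (n + 1) < f n ^ 2 := by
  -- key ratio inequality
  have key : ∀ d j : ℕ, p j * p (j + d + 1) ≤ p (j + 1) * p (j + d) := by
    intro d
    induction d with
    | zero => intro j; simp [mul_comm]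
    | succ d ih =>
      intro j
      have h1 := ih j
      have h2 := hlc (j + d + 1) (by omega)
      have e : j + d + 1 - 1 = j + d := by omega
      rw [e] at h2
      have hd2 : j + (d + 1) + 1 = j + d + 1 + 1 := by ring
      have hd1 : j + (d + 1) = j + d + 1 := by ring
      rw [hd2, hd1]
      have p1 := hpos (j + d)
      have p2 := hpos (j + d + 1)
      have p3 := hpos j
      have p4 := hpos (j + 1)
      have p5 := hpos (j + d + 2)
      nlinarith [mul_pos p1 p2]
  have key' : ∀ j n : ℕ, j ≤ n → p j * p (n + 1) ≤ p (j + 1) * p n := by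
    intro j n hjn
    have := key (n - j) j
    have e1 : j + (n - j) = n := by omega
    rw [e1] at this
    exact this
  intro n hn
  obtain ⟨m, rfl⟩ : ∃ m, n = m + 1 := ⟨n - 1, by omega⟩
  have hm : m + 1 - 1 = m := by omega
  rw [hm]
  have fpos : ∀ k, 0 < f k := by
    intro k
    rw [hf k]
    exact Finset.sum_pos (fun i _ => hpos i) (by simp)
  have hsum : f m * p (m + 2) ≤ (f (m + 1) - p 0) * p (m + 1) := by
    have h1 : f m * p (m + 2) = ∑ j ∈ Finset.range (m + 1), p j * p (m + 2) := by
      rw [hf, Finset.sum_mul]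
    have h2 : ∑ j ∈ Finset.range (m + 1), p j * p (m + 2)
        ≤ ∑ j ∈ Finset.range (m + 1), p (j + 1) * p (m + 1) := by
      apply Finset.sum_le_sum
      intro i hi
      have : i ≤ m + 1 := by simp at hi; omega
      exact key' i (m + 1) this
    have h3 : ∑ j ∈ Finset.range (m + 1), p (j + 1) = f (m + 1) - p 0 := by
      have := Finset.sum_range_succ' p (m + 1)
      rw [hf (m + 1)]
      linarith [this]
    calc f m * p (m + 2) ≤ ∑ j ∈ Finset.range (m + 1), p (j + 1) * p (m + 1) := by
            rw [h1]; exact h2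
      _ = (f (m + 1) - p 0) * p (m + 1) := by rw [← h3, Finset.sum_mul]
  have e2 : f (m + 2) = f (m + 1) + p (m + 2) := by
    rw [hf (m + 2), hf (m + 1), Finset.sum_range_succ]
  have e1 : f (m + 1) = f m + p (m + 1) := by
    rw [hf (m + 1), hf m, Finset.sum_range_succ]
  nlinarith [fpos m, fpos (m + 1), hpos 0, hpos (m + 1), hpos (m + 2),
    mul_pos (hpos 0) (hpos (m + 1))]
end

section
/- The iterated partial-sum operators L^k turn log-concavity into strict log-concavity: let k ≥ 1 be a natural number and p : ℕ → ℝ with p(n) > 0 for all n and p log-concave on [0,∞) (p(n)² ≥ p(n−1)·p(n+1) for all n ≥ 1). Define (L^k p)(n) := ∑_{j=0}^{n} C(n−j+k−1, n−j)·p(j), where C denotes the binomial coefficient. Then f := L^k p is strictly log-concave: f(n)² > f(n−1)·f(n+1) for all n ≥ 1. -/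
/-!
The operator `L^(k+1)` is the `(k+1)`-fold iterate of taking partial sums: summing the kernel
`C(i+k, i)` over `i ≤ d` gives `C(d+k+1, d)` by the hockey-stick identity. So it suffices that
partial sums `S` of a positive log-concave sequence `a` are strictly log-concave. Since
`S (m+1)^2 - S m * S (m+2) = S (m+1) * a (m+1) - S m * a (m+2)`, this follows by comparing
`a j * a (m+2) ≤ a (j+1) * a (m+1)` termwise (the ratio `a (n+1) / a n` is antitone); the term
`a 0 * a (m+1)` left over on the right makes the inequality strict.
-/

open Finset

def partialSums {M : Type*} [AddCommMonoid M] (a : ℕ → M) (n : ℕ) : M :=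
  ∑ j ∈ range (n + 1), a j

section Convolution

variable {R : Type*} [CommSemiring R]

theorem partialSums_convolution (c p : ℕ → R) (n : ℕ) :
    partialSums (fun m ↦ ∑ j ∈ range (m + 1), c (m - j) * p j) n =
      ∑ j ∈ range (n + 1), partialSums c (n - j) * p j := by
  simp only [partialSums, range_eq_Ico, ← sum_Ico_Ico_comm, sum_mul]
  refine sum_congr rfl fun j hj ↦ ?_
  rw [sum_Ico_eq_sum_range, ← Nat.sub_add_comm (by simpa [Nat.lt_succ_iff] using hj)]
  simp

theorem iterate_partialSums_eq_sum_choose (p : ℕ → R) (k n : ℕ) :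
    partialSums^[k + 1] p n = ∑ j ∈ range (n + 1), ((n - j + k).choose (n - j) : R) * p j := by
  induction k generalizing n with
  | zero => simp [partialSums]
  | succ k ih =>
    have hockey (d : ℕ) : partialSums (fun i ↦ ((i + k).choose i : R)) d =
        ((d + (k + 1)).choose d : R) := by
      simp_rw [partialSums, Nat.choose_symm_add, ← Nat.cast_sum, Nat.sum_range_add_choose]
      rw [add_assoc, ← Nat.choose_symm_add]
    rw [Function.iterate_succ_apply', funext ih]
    exact (partialSums_convolution (fun i ↦ ((i + k).choose i : R)) p n).trans
      (by simp_rw [hockey])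

end Convolution

section LogConcave

variable {R : Type*} [Semiring R] [Preorder R] {a : ℕ → R}

def LogConcave (a : ℕ → R) : Prop := ∀ n, a n * a (n + 2) ≤ a (n + 1) ^ 2

def StrictLogConcave (a : ℕ → R) : Prop := ∀ n, a n * a (n + 2) < a (n + 1) ^ 2

theorem StrictLogConcave.logConcave (h : StrictLogConcave a) : LogConcave a :=
  fun n ↦ (h n).le

end LogConcave

section Positivity

variable {M : Type*} [AddCommMonoid M] [PartialOrder M] [IsOrderedCancelAddMonoid M] {a : ℕ → M}

theorem partialSums_pos (hpos : ∀ n, 0 < a n) (n : ℕ) : 0 < partialSums a n :=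
  sum_pos (fun j _ ↦ hpos j) nonempty_range_add_one

theorem iterate_partialSums_pos (hpos : ∀ n, 0 < a n) (k n : ℕ) : 0 < partialSums^[k] a n := by
  induction k generalizing n with
  | zero => exact hpos n
  | succ k ih => rw [Function.iterate_succ_apply']; exact partialSums_pos ih n

end Positivity

section PartialSums

variable {R : Type*} [Field R] [LinearOrder R] [IsStrictOrderedRing R] {a : ℕ → R}

theorem LogConcave.antitone_ratio (hpos : ∀ n, 0 < a n) (h : LogConcave a) :
    Antitone fun n ↦ a (n + 1) / a n :=
  antitone_nat_of_succ_le fun n ↦ by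
    rw [div_le_div_iff₀ (hpos _) (hpos _)]
    have := h n
    rw [sq] at this
    linarith

theorem LogConcave.mul_le_mul_succ (hpos : ∀ n, 0 < a n) (h : LogConcave a) {i l : ℕ}
    (hil : i ≤ l) : a i * a (l + 1) ≤ a (i + 1) * a l := by
  have := h.antitone_ratio hpos hil
  rw [div_le_div_iff₀ (hpos _) (hpos _)] at this
  linarith

theorem LogConcave.strictLogConcave_partialSums (hpos : ∀ n, 0 < a n) (h : LogConcave a) :
    StrictLogConcave (partialSums a) := by
  intro m
  set S := partialSums a
  have hS1 : S (m + 1) = S m + a (m + 1) := sum_range_succ a (m + 1)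
  have hS2 : S (m + 2) = S (m + 1) + a (m + 2) := sum_range_succ a (m + 2)
  suffices S m * a (m + 2) < S (m + 1) * a (m + 1) by
    nlinarith [partialSums_pos hpos m, hpos (m + 1)]
  calc S m * a (m + 2) = ∑ j ∈ range (m + 1), a j * a (m + 2) := sum_mul ..
    _ ≤ ∑ j ∈ range (m + 1), a (j + 1) * a (m + 1) :=
        sum_le_sum fun j hj ↦ h.mul_le_mul_succ hpos (by have := mem_range.1 hj; omega)
    _ < ∑ j ∈ range (m + 1), a (j + 1) * a (m + 1) + a 0 * a (m + 1) :=
        lt_add_of_pos_right _ (mul_pos (hpos 0) (hpos (m + 1)))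
    _ = S (m + 1) * a (m + 1) := by
        rw [← sum_range_succ' (fun j ↦ a j * a (m + 1)), ← sum_mul]; rfl

theorem LogConcave.strictLogConcave_iterate_partialSums (hpos : ∀ n, 0 < a n) (h : LogConcave a)
    (k : ℕ) : StrictLogConcave (partialSums^[k + 1] a) := by
  induction k with
  | zero => exact h.strictLogConcave_partialSums hpos
  | succ k ih =>
    rw [Function.iterate_succ']
    exact ih.logConcave.strictLogConcave_partialSums (iterate_partialSums_pos hpos _)

end PartialSums

/-- The iterated partial-sum operators L^k turn log-concavity into strict
log-concavity: (L^k p)(n) := ∑_{j=0}^n C(n-j+k-1, n-j)·p(j). -/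
theorem Lk_strictly_log_concave
    (k : ℕ) (hk : 1 ≤ k) (p : ℕ → ℝ)
    (hpos : ∀ n : ℕ, 0 < p n)
    (hlc : ∀ n : ℕ, 1 ≤ n → p (n - 1) * p (n + 1) ≤ p n ^ 2)
    (f : ℕ → ℝ)
    (hf : ∀ n : ℕ, f n = ∑ j ∈ Finset.range (n + 1),
      ((n - j + k - 1).choose (n - j) : ℝ) * p j) :
    ∀ n : ℕ, 1 ≤ n → f (n - 1) * f (n + 1) < f n ^ 2 := by
  obtain ⟨k, rfl⟩ := Nat.exists_eq_add_of_le' hk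
  have hp : LogConcave p := fun n ↦ by simpa using hlc (n + 1) n.succ_pos
  have hf_iterate : f = partialSums^[k + 1] p := by
    funext n
    rw [hf, iterate_partialSums_eq_sum_choose]
    simp
  rintro (_ | n) hn
  · omega
  · simpa [hf_iterate] using hp.strictLogConcave_iterate_partialSums hpos k n
end
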